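/- arXiv:2602.06377 — 10 statements merged into one kernel-verified Lean document; each statement's English description precedes it below -/
import Mathlib

section
/- Let q be a prime power, let F_{q^2} be the finite field with q^2 elements, let n = 2k be even, and let α = (α_1, ..., α_n) be a vector of n distinct elements of F_{q^2}. Then there exists a vector v = (v_1, ..., v_n) ∈ (F_{q^2}^*)^n such that the generalized Reed–Solomon code GRS_{n,k}(α, v) is Hermitian self-dual if and only if the system of equations ∑_{l=1}^n α_l^{i+jq} x_l = 0 for all 0 ≤ i, j ≤ k−1 has a solution x = (x_1, ..., x_n) with every x_l a nonzero element of the subfield F_q ⊆ F_{q^2}. -/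
open Finset

/-- The generalized Reed–Solomon code `GRS_{n,k}(α, v)`:
codewords `(v₁ f(α₁), ..., vₙ f(αₙ))` for `f` of degree `≤ k - 1`. -/
def GRScode {F : Type*} [Field F] (n k : ℕ) (α v : Fin n → F) : Set (Fin n → F) :=
  {c | ∃ f : Polynomial F, f.degree < (k : WithBot ℕ) ∧
    ∀ i, c i = v i * Polynomial.eval (α i) f}

/-- A linear code `C ⊆ F_{q²}ⁿ` is Hermitian self-dual if it equals its
Hermitian dual `{x | ∀ y ∈ C, ∑ xᵢ yᵢ^q = 0}`. -/
def IsHermitianSelfDual {F : Type*} [Field F] (q n : ℕ) (C : Set (Fin n → F)) : Prop :=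
  C = {x | ∀ y ∈ C, ∑ i, x i * y i ^ q = 0}

section Aux

variable {F : Type*} [Field F] [Fintype F]

/-- In a field of cardinality `q^2` (with `q` a prime power), `x ↦ x^q` is a ring hom. -/
lemma exists_pow_ringHom (q : ℕ) (hq : IsPrimePow q) (hcard : Fintype.card F = q ^ 2) :
    ∃ φ : F →+* F, ∀ x, φ x = x ^ q := by
  obtain ⟨p, s, hp, hs, rfl⟩ := hq
  replace hp := Nat.prime_iff.mpr hp
  obtain ⟨m, hp', hcard'⟩ := FiniteField.card F (ringChar F)
  have hdvd : p ∣ ringChar F := by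
    have h1 : p ∣ Fintype.card F := by
      rw [hcard, ← pow_mul]
      exact dvd_pow_self p (by positivity)
    rw [hcard'] at h1
    exact hp.prime.dvd_of_dvd_pow h1
  have hpe : p = ringChar F := ((Nat.prime_dvd_prime_iff_eq hp hp').mp hdvd)
  haveI : CharP F p := hpe ▸ ringChar.charP F
  haveI : ExpChar F p := ExpChar.prime hp
  exact ⟨iterateFrobenius F p s, fun x => iterateFrobenius_def p s x⟩

/-- Norm surjectivity onto the subfield fixed by `x ↦ x^q`. -/
lemma grs_exists_norm_eq (q : ℕ) (hq : IsPrimePow q) (hcard : Fintype.card F = q ^ 2)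
    {x : F} (hx : x ≠ 0) (hfix : x ^ q = x) : ∃ v : F, v ≠ 0 ∧ v ^ (q + 1) = x := by
  classical
  have h1 : 1 ≤ q := hq.one_lt.le
  obtain ⟨g, hg⟩ := IsCyclic.exists_generator (α := Fˣ)
  have horder : orderOf g = q ^ 2 - 1 := by
    rw [orderOf_eq_card_of_forall_mem_zpowers hg, Nat.card_eq_fintype_card, Fintype.card_units, hcard]
  set u : Fˣ := Units.mk0 x hx with hu
  obtain ⟨t, ht⟩ : ∃ t : ℕ, g ^ t = u :=
    ((isOfFinOrder_of_finite g).mem_powers_iff_mem_zpowers.mpr (hg u))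
  have hx1 : x ^ (q - 1) = 1 := by
    have : x ^ (q - 1) * x = 1 * x := by
      rw [← pow_succ, Nat.sub_add_cancel h1, hfix, one_mul]
    exact mul_right_cancel₀ hx this
  have hu1 : u ^ (q - 1) = 1 := by
    ext; push_cast [hu]; exact hx1
  have hdvd : q ^ 2 - 1 ∣ t * (q - 1) := by
    rw [← horder]
    apply orderOf_dvd_of_pow_eq_one
    rw [pow_mul, ht, hu1]
  have hkey : (q - 1) * (q + 1) = q ^ 2 - 1 := by
    have h2 : 1 ≤ q ^ 2 := Nat.one_le_pow _ _ (by omega)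
    zify [h1, h2]; ring
  rw [← hkey] at hdvd
  obtain ⟨c, hc⟩ := hdvd
  have hc' : (q - 1) * t = (q - 1) * ((q + 1) * c) := by
    rw [← mul_assoc]; rw [mul_comm t (q-1)] at hc; exact hc
  have hqpos : 0 < q - 1 := by
    have := hq.one_lt; omega
  have ht' : t = (q + 1) * c := Nat.eq_of_mul_eq_mul_left hqpos hc'
  refine ⟨((g ^ c : Fˣ) : F), Units.ne_zero _, ?_⟩
  have : (g ^ c) ^ (q + 1) = u := by
    rw [← pow_mul, mul_comm c (q+1), ← ht', ht]
  calc ((g ^ c : Fˣ) : F) ^ (q + 1) = (((g ^ c) ^ (q + 1) : Fˣ) : F) := by push_cast; ring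
    _ = x := by rw [this]; rfl

/-- Evaluation of a polynomial of degree `< k` as a sum over `range k`. -/
lemma eval_lt_expand {f : Polynomial F} {k : ℕ} (h : f.degree < (k : WithBot ℕ)) (a : F) :
    f.eval a = ∑ i ∈ range k, f.coeff i * a ^ i := by
  rcases eq_or_ne f 0 with rfl | hf
  · simp
  · exact Polynomial.eval_eq_sum_range' ((Polynomial.natDegree_lt_iff_degree_lt hf).mpr h) a

end Aux

section Main

open Polynomial Module

variable {F : Type*} [Field F] [Fintype F]

/-- The evaluation linear map `f ↦ (w l * f(β l))_l`. -/
noncomputable def evalMap (n : ℕ) (w β : Fin n → F) : F[X] →ₗ[F] (Fin n → F) :=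
  LinearMap.pi fun l => w l • Polynomial.leval (β l)

lemma evalMap_apply (n : ℕ) (w β : Fin n → F) (f : F[X]) (l : Fin n) :
    evalMap n w β f l = w l * f.eval (β l) := rfl

lemma finrank_evalMap_image {k : ℕ} (w β : Fin (2 * k) → F) (hw : ∀ l, w l ≠ 0)
    (hβ : Function.Injective β) :
    finrank F ((degreeLT F k).map (evalMap (2 * k) w β)) = k := by
  classical
  haveI : FiniteDimensional F (degreeLT F k) :=
    (Polynomial.degreeLTEquiv F k).symm.finiteDimensional
  have hinj : Function.Injective
      ((evalMap (2 * k) w β).comp (Submodule.subtype (degreeLT F k))) := by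
    rw [← LinearMap.ker_eq_bot]
    apply LinearMap.ker_eq_bot'.mpr
    rintro ⟨f, hf⟩ hf0
    have heval : ∀ l, f.eval (β l) = 0 := by
      intro l
      have := congrFun hf0 l
      simp only [LinearMap.comp_apply, Submodule.subtype_apply] at this
      rw [evalMap_apply] at this
      simpa using (mul_eq_zero.mp this).resolve_left (hw l)
    have hfz : f = 0 := by
      rcases eq_or_ne f 0 with h | h
      · exact h
      · refine Polynomial.eq_zero_of_natDegree_lt_card_of_eval_eq_zero f hβ heval ?_
        have hd : f.natDegree < k :=
          (Polynomial.natDegree_lt_iff_degree_lt h).mpr (Polynomial.mem_degreeLT.mp hf)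
        simp only [Fintype.card_fin]
        omega
    exact Subtype.ext hfz
  have hmap : (degreeLT F k).map (evalMap (2 * k) w β) =
      LinearMap.range ((evalMap (2 * k) w β).comp (Submodule.subtype (degreeLT F k))) := by
    rw [LinearMap.range_comp, Submodule.range_subtype]
  rw [hmap, LinearMap.finrank_range_of_inj hinj,
    (Polynomial.degreeLTEquiv F k).finrank_eq, finrank_pi, Fintype.card_fin]

/-- The main construction: if the monomial orthogonality relations hold
for `x_l = v_l^{q+1}`, the GRS code is Hermitian self-dual. -/
lemma main_selfdual {q k : ℕ} (hq : IsPrimePow q) (hcard : Fintype.card F = q ^ 2)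
    (α : Fin (2 * k) → F) (hα : Function.Injective α)
    (v : Fin (2 * k) → F) (hv : ∀ l, v l ≠ 0)
    (heq : ∀ i j : Fin k, ∑ l, α l ^ ((i : ℕ) + (j : ℕ) * q) * v l ^ (q + 1) = 0) :
    IsHermitianSelfDual q (2 * k) (GRScode (2 * k) k α v) := by
  classical
  obtain ⟨φ, hφ⟩ := exists_pow_ringHom q hq hcard
  have hφinj : Function.Injective φ := φ.injective
  have hφbij : Function.Bijective φ := ⟨hφinj, Finite.injective_iff_surjective.mp hφinj⟩
  set e : F ≃+* F := RingEquiv.ofBijective φ hφbij with he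
  have hαq : Function.Injective (fun l => α l ^ q) := by
    intro a b hab
    apply hα
    apply hφinj
    rw [hφ, hφ]; exact hab
  set Csub : Submodule F (Fin (2 * k) → F) := (degreeLT F k).map (evalMap (2 * k) v α) with hCsub
  set Csub' : Submodule F (Fin (2 * k) → F) :=
    (degreeLT F k).map (evalMap (2 * k) (fun l => v l ^ q) (fun l => α l ^ q)) with hCsub'
  -- set-level identification of the code
  have hset : GRScode (2 * k) k α v = ↑Csub := by
    ext c
    constructor
    · rintro ⟨f, hf, hc⟩
      exact ⟨f, Polynomial.mem_degreeLT.mpr hf, funext fun l => (hc l).symm⟩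
    · rintro ⟨f, hf, rfl⟩
      exact ⟨f, Polynomial.mem_degreeLT.mp hf, fun l => rfl⟩
  -- Frobenius twisting of codewords
  have hEq : ∀ f : F[X], ∀ l : Fin (2 * k),
      evalMap (2 * k) (fun l => v l ^ q) (fun l => α l ^ q) (f.map φ) l
        = (evalMap (2 * k) v α f l) ^ q := by
    intro f l
    rw [evalMap_apply, evalMap_apply]
    have h1 : (α l) ^ q = φ (α l) := (hφ _).symm
    rw [h1, Polynomial.eval_map, Polynomial.eval₂_at_apply, hφ, mul_pow]
  have hσ : ∀ z : Fin (2 * k) → F,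
      z ∈ Csub' ↔ ∃ y ∈ Csub, z = fun l => (y l) ^ q := by
    intro z
    constructor
    · rintro ⟨g, hg, rfl⟩
      refine ⟨evalMap (2 * k) v α (g.map ↑e.symm), ⟨g.map ↑e.symm,
        Polynomial.mem_degreeLT.mpr ?_, rfl⟩, ?_⟩
      · rw [Polynomial.degree_map_eq_of_injective (e.symm.injective)]
        exact Polynomial.mem_degreeLT.mp hg
      · funext l
        rw [← hEq]
        rw [Polynomial.map_map]
        have : φ.comp (e.symm : F →+* F) = RingHom.id F := by
          ext x
          simp only [RingHom.comp_apply, RingHom.id_apply, RingHom.coe_coe]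
          exact e.apply_symm_apply x
        rw [this, Polynomial.map_id]
    · rintro ⟨y, ⟨f, hf, rfl⟩, rfl⟩
      refine ⟨f.map φ, Polynomial.mem_degreeLT.mpr ?_, ?_⟩
      · rw [Polynomial.degree_map_eq_of_injective hφinj]
        exact Polynomial.mem_degreeLT.mp hf
      · funext l; exact hEq f l
  -- the dual pairing
  set Ψ : (Fin (2 * k) → F) ≃ₗ[F] Module.Dual F (Fin (2 * k) → F) :=
    (Pi.basisFun F (Fin (2 * k))).toDualEquiv with hΨdef
  have hΨ : ∀ x y : Fin (2 * k) → F, Ψ x y = ∑ i, x i * y i := by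
    intro x y
    conv_lhs => rw [← (Pi.basisFun F (Fin (2 * k))).sum_repr y]
    rw [map_sum]
    simp only [map_smul, hΨdef, Basis.toDualEquiv_apply, Basis.toDual_eq_repr,
      Pi.basisFun_repr, smul_eq_mul]
    exact Finset.sum_congr rfl fun i _ => mul_comm _ _
  set Dsub : Submodule F (Fin (2 * k) → F) :=
    Csub'.dualAnnihilator.comap Ψ.toLinearMap with hDsub
  -- The Hermitian dual of the code is Dsub
  have hDset : {x : Fin (2 * k) → F |
      ∀ y ∈ GRScode (2 * k) k α v, ∑ i, x i * y i ^ q = 0} = ↑Dsub := by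
    ext x
    simp only [Set.mem_setOf_eq, SetLike.mem_coe, hDsub, Submodule.mem_comap,
      LinearEquiv.coe_coe, Submodule.mem_dualAnnihilator]
    constructor
    · intro H w hw
      obtain ⟨y, hy, rfl⟩ := (hσ w).mp hw
      rw [hΨ]
      exact H y (by rw [hset]; exact hy)
    · intro H y hy
      rw [hset] at hy
      have hw : (fun l => (y l) ^ q) ∈ Csub' := (hσ _).mpr ⟨y, hy, rfl⟩
      have := H _ hw
      rwa [hΨ] at this
  -- ranks
  have hvq : ∀ l, v l ^ q ≠ 0 := fun l => pow_ne_zero _ (hv l)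
  have hrankC : finrank F Csub = k := finrank_evalMap_image v α hv hα
  have hrankC' : finrank F Csub' = k := finrank_evalMap_image _ _ hvq hαq
  have hrankD : finrank F Dsub = k := by
    have h1 : Dsub = Csub'.dualAnnihilator.map Ψ.symm.toLinearMap := by
      rw [hDsub, Submodule.comap_equiv_eq_map_symm]
    rw [h1, LinearEquiv.finrank_map_eq]
    have h2 := Submodule.finrank_quotient_add_finrank Csub'
    have h3 : finrank F ((Fin (2 * k) → F) ⧸ Csub') = finrank F Csub'.dualAnnihilator :=
      LinearEquiv.finrank_eq (Subspace.quotEquivAnnihilator Csub')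
    have h4 : finrank F (Fin (2 * k) → F) = 2 * k := by
      rw [finrank_pi, Fintype.card_fin]
    omega
  -- orthogonality
  have orth : ∀ f g : F[X], f.degree < (k : WithBot ℕ) → g.degree < (k : WithBot ℕ) →
      ∑ l, (v l * f.eval (α l)) * (v l ^ q * g.eval (α l ^ q)) = 0 := by
    intro f g hf hg
    have step : ∀ l : Fin (2 * k), (v l * f.eval (α l)) * (v l ^ q * g.eval (α l ^ q))
        = ∑ i ∈ range k, ∑ j ∈ range k,
            (f.coeff i * g.coeff j) * (α l ^ (i + j * q) * v l ^ (q + 1)) := by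
      intro l
      rw [eval_lt_expand hf, eval_lt_expand hg, Finset.mul_sum, Finset.mul_sum,
        Finset.sum_mul_sum]
      refine Finset.sum_congr rfl fun i _ => Finset.sum_congr rfl fun j _ => ?_
      rw [pow_add, pow_mul (α l) j q, pow_add (v l) q 1, pow_one]
      ring
    calc ∑ l, (v l * f.eval (α l)) * (v l ^ q * g.eval (α l ^ q))
        = ∑ l, ∑ i ∈ range k, ∑ j ∈ range k,
            (f.coeff i * g.coeff j) * (α l ^ (i + j * q) * v l ^ (q + 1)) :=
          Finset.sum_congr rfl fun l _ => step l
      _ = ∑ i ∈ range k, ∑ j ∈ range k, (f.coeff i * g.coeff j) *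
            ∑ l, α l ^ (i + j * q) * v l ^ (q + 1) := by
          rw [Finset.sum_comm]
          refine Finset.sum_congr rfl fun i _ => ?_
          rw [Finset.sum_comm]
          exact Finset.sum_congr rfl fun j _ => by rw [Finset.mul_sum]
      _ = 0 := by
          refine Finset.sum_eq_zero fun i hi => Finset.sum_eq_zero fun j hj => ?_
          rw [heq ⟨i, mem_range.mp hi⟩ ⟨j, mem_range.mp hj⟩, mul_zero]
  -- containment
  have hle : Csub ≤ Dsub := by
    rintro c ⟨f, hf, rfl⟩
    rw [hDsub]
    simp only [Submodule.mem_comap, LinearEquiv.coe_coe, Submodule.mem_dualAnnihilator]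
    rintro w ⟨g, hg, rfl⟩
    rw [hΨ]
    have := orth f g (Polynomial.mem_degreeLT.mp hf) (Polynomial.mem_degreeLT.mp hg)
    simpa [evalMap_apply] using this
  have hfinal : Csub = Dsub :=
    Submodule.eq_of_le_of_finrank_eq hle (by rw [hrankC, hrankD])
  show GRScode (2 * k) k α v = {x | ∀ y ∈ GRScode (2 * k) k α v, ∑ i, x i * y i ^ q = 0}
  rw [hDset, hset, hfinal]

end Main

/-- There is `v ∈ (F_{q²}^*)ⁿ` making `GRS_{n,k}(α,v)` Hermitian
self-dual iff `∑ₗ αₗ^{i+jq} xₗ = 0` (for all `0 ≤ i,j ≤ k-1`) has a solution with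
all `xₗ` nonzero elements of the subfield `F_q`. -/
theorem stmt3 {F : Type*} [Field F] [Fintype F] (q k : ℕ)
    (hq : IsPrimePow q) (hcard : Fintype.card F = q ^ 2)
    (α : Fin (2 * k) → F) (hα : Function.Injective α) :
    (∃ v : Fin (2 * k) → F, (∀ l, v l ≠ 0) ∧
        IsHermitianSelfDual q (2 * k) (GRScode (2 * k) k α v)) ↔
    (∃ x : Fin (2 * k) → F, (∀ l, x l ≠ 0 ∧ x l ^ q = x l) ∧
        ∀ i j : Fin k, ∑ l, α l ^ ((i : ℕ) + (j : ℕ) * q) * x l = 0) := by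
  constructor
  · rintro ⟨v, hv, hsd⟩
    refine ⟨fun l => v l ^ (q + 1), fun l => ⟨pow_ne_zero _ (hv l), ?_⟩, ?_⟩
    · have hvq2 : v l ^ (q ^ 2) = v l := by
        have := FiniteField.pow_card (v l)
        rwa [hcard] at this
      calc (v l ^ (q + 1)) ^ q = v l ^ (q ^ 2) * v l ^ q := by
            rw [← pow_mul, ← pow_add]
            congr 1
            ring
        _ = v l * v l ^ q := by rw [hvq2]
        _ = v l ^ (q + 1) := by rw [pow_add, pow_one, mul_comm]
    · intro i j
      have hm : ∀ m : ℕ, m < k → (fun l => v l * α l ^ m) ∈ GRScode (2 * k) k α v := by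
        intro m hmk
        refine ⟨Polynomial.X ^ m, ?_, fun l => by simp⟩
        rw [Polynomial.degree_X_pow]
        exact_mod_cast hmk
      have h1 := hm i i.isLt
      have h2 := hm j j.isLt
      have h3 : (fun l => v l * α l ^ (i : ℕ)) ∈
          {x : Fin (2 * k) → F | ∀ y ∈ GRScode (2 * k) k α v, ∑ l, x l * y l ^ q = 0} := by
        rw [← hsd]; exact h1
      have h4 := h3 _ h2
      rw [← h4]
      refine Finset.sum_congr rfl fun l _ => ?_
      simp only [mul_pow, ← pow_mul, pow_add, pow_one]
      ring
  · rintro ⟨x, hx, heqs⟩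
    choose v hv hvx using fun l => grs_exists_norm_eq q hq hcard (hx l).1 (hx l).2
    refine ⟨v, hv, main_selfdual hq hcard α hα v hv ?_⟩
    intro i j
    have := heqs i j
    simp only [hvx]
    exact this
end

section
/- Let q be a prime power, let F_{q^2} be the finite field with q^2 elements, let n = 2k with n ≤ q + k, let α_1, ..., α_n be distinct elements of F_{q^2}, and let x_1, ..., x_n ∈ F_{q^2}^* be nonzero. Define Δ_i = ∑_{l=1}^n α_l^i x_l for i ≥ 0, and suppose Δ_{i+jq} = 0 for all 0 ≤ i, j ≤ k−1. Then the k vectors β_0, β_1, ..., β_{k−1} ∈ F_{q^2}^k are linearly independent over F_{q^2}, where β_l = (Δ_{lq+k}, Δ_{lq+k+1}, ..., Δ_{lq+n−1}) for l = 0, 1, ..., k−1. -/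
open Finset

/-- Let `n = 2k ≤ q + k`, let `α₁, ..., αₙ ∈ F_{q²}` be distinct,
`x₁, ..., xₙ` nonzero, `Δᵢ = ∑ₗ αₗⁱ xₗ`, and suppose `Δ_{i+jq} = 0` for
`0 ≤ i, j ≤ k-1`. Then the vectors `βₗ = (Δ_{lq+k}, ..., Δ_{lq+n-1})`,
`l = 0, ..., k-1`, are linearly independent over `F_{q²}`. -/
theorem stmt4 {F : Type*} [Field F] [Fintype F] (q k : ℕ)
    (hq : IsPrimePow q) (hcard : Fintype.card F = q ^ 2)
    (hnk : 2 * k ≤ q + k)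
    (α : Fin (2 * k) → F) (hα : Function.Injective α)
    (x : Fin (2 * k) → F) (hx : ∀ l, x l ≠ 0)
    (hΔ : ∀ i j : Fin k, ∑ l, α l ^ ((i : ℕ) + (j : ℕ) * q) * x l = 0) :
    LinearIndependent F
      (fun l : Fin k => fun t : Fin k =>
        ∑ m, α m ^ ((l : ℕ) * q + k + (t : ℕ)) * x m) := by
  -- the q-power map is injective (Frobenius)
  have hfrob : Function.Injective (fun z : F => z ^ q) := by
    obtain ⟨p, e, hp, he, hpe⟩ := hq
    have hp' : p.Prime := hp.nat_prime
    have hchar : CharP F p := by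
      obtain ⟨r, hr⟩ := CharP.exists F
      haveI := hr
      obtain ⟨n, hrp, hcardr⟩ := FiniteField.card F r
      have hdvd : r ∣ q ^ 2 := by
        rw [← hcard, hcardr]
        exact dvd_pow_self r n.pos.ne'
      have hreq : r = p := by
        have : r ∣ p ^ (e * 2) := by rwa [pow_mul, hpe]
        exact (Nat.prime_dvd_prime_iff_eq hrp hp').mp (hrp.dvd_of_dvd_pow this)
      exact hreq ▸ hr
    haveI := hchar
    haveI : Fact p.Prime := ⟨hp'⟩
    have : (fun z : F => z ^ q) = iterateFrobenius F p e := by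
      funext z; rw [iterateFrobenius_def, hpe]
    rw [this]
    exact (iterateFrobenius F p e).injective
  rw [Fintype.linearIndependent_iff]
  intro c hc
  set y : Fin (2 * k) → F :=
    fun m => (∑ l : Fin k, c l * α m ^ ((l : ℕ) * q)) * x m with hy
  have key : ∀ i : Fin (2 * k), ∑ m, α m ^ (i : ℕ) * y m = 0 := by
    intro i
    have hswap : ∑ m, α m ^ (i : ℕ) * y m
        = ∑ l : Fin k, c l * ∑ m, α m ^ ((i : ℕ) + (l : ℕ) * q) * x m := by
      simp only [hy, Finset.mul_sum, Finset.sum_mul]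
      rw [Finset.sum_comm]
      refine Finset.sum_congr rfl fun l _ => Finset.sum_congr rfl fun m _ => ?_
      rw [pow_add]; ring
    rw [hswap]
    rcases lt_or_ge (i : ℕ) k with h | h
    · refine Finset.sum_eq_zero fun l _ => ?_
      have := hΔ ⟨(i : ℕ), h⟩ l
      simp only at this
      rw [this, mul_zero]
    · have ht : (i : ℕ) - k < k := by omega
      have hc' := congrFun hc ⟨(i : ℕ) - k, ht⟩
      simp only [Finset.sum_apply, Pi.smul_apply, smul_eq_mul, Pi.zero_apply] at hc'
      rw [← hc']
      refine Finset.sum_congr rfl fun l _ => ?_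
      have he : (i : ℕ) + (l : ℕ) * q
          = (l : ℕ) * q + k + ((⟨(i : ℕ) - k, ht⟩ : Fin k) : ℕ) := by
        simp only [Fin.val_mk]; omega
      rw [he]
  -- Vandermonde: y = 0
  have hy0 : ∀ m, y m = 0 := by
    have hdet : (((Matrix.vandermonde α).transpose)).det ≠ 0 := by
      rw [Matrix.det_transpose, Matrix.det_vandermonde_ne_zero_iff]
      exact hα
    have hmv : Matrix.mulVec ((Matrix.vandermonde α).transpose) y = 0 := by
      funext i
      simpa [Matrix.mulVec, Matrix.vandermonde, dotProduct] using key i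
    have := Matrix.eq_zero_of_mulVec_eq_zero hdet hmv
    exact fun m => congrFun this m
  have hsum : ∀ m : Fin (2 * k), ∑ l : Fin k, c l * (α m ^ q) ^ (l : ℕ) = 0 := by
    intro m
    have h0 := hy0 m
    rw [hy] at h0
    rcases mul_eq_zero.mp h0 with h0 | h0
    · rw [← h0]
      refine Finset.sum_congr rfl fun l _ => ?_
      rw [← pow_mul, mul_comm (l : ℕ) q]
    · exact absurd h0 (hx m)
  -- second Vandermonde with γ = α^q restricted to first k indices
  set γ : Fin k → F := fun t => α (Fin.castLE (by omega) t) ^ q with hγdef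
  have hγ : Function.Injective γ := by
    intro a b hab
    have := hα (hfrob hab)
    exact Fin.castLE_injective _ this
  have hdet : (Matrix.vandermonde γ).det ≠ 0 := by
    rw [Matrix.det_vandermonde_ne_zero_iff]; exact hγ
  have hmv : (Matrix.vandermonde γ).mulVec c = 0 := by
    funext i
    have := hsum (Fin.castLE (by omega) i)
    simpa [Matrix.mulVec, Matrix.vandermonde, dotProduct, hγdef, mul_comm] using this
  have := Matrix.eq_zero_of_mulVec_eq_zero hdet hmv
  exact fun l => congrFun this l
end

section
/- Let q be a prime power, let F_{q^2} be the finite field with q^2 elements, let n = 2k, let α = (α_1, ..., α_n) be a vector of n distinct elements of F_{q^2}, and let v = (v_1, ..., v_n) ∈ (F_{q^2}^*)^n. If the generalized Reed–Solomon code GRS_{n,k}(α, v) is Hermitian self-dual, then n ≤ q + 1. Equivalently, for n > q + 1 there exist no q^2-ary Hermitian self-dual generalized Reed–Solomon codes of length n. -/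
open Finset

open Polynomial in
private lemma grs_core {F : Type*} [Field F] (q k : ℕ) (hq2 : 2 ≤ q) (hqk : q + 2 ≤ 2 * k)
    (α : Fin (2 * k) → F) (hα : Function.Injective α)
    (u : Fin (2 * k) → F) (hu : ∀ l, u l ≠ 0)
    (rel : ∀ a b : ℕ, a < k → b < k → ∑ i, u i * α i ^ (a + b * q) = 0) : False := by
  classical
  have hk1 : 2 ≤ k := by omega
  set m : Polynomial F := ∏ i : Fin (2 * k), (X - C (α i)) with hm
  have hmne : ∀ i : Fin (2 * k), (X - C (α i)) ≠ 0 := fun i => X_sub_C_ne_zero (α i)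
  have hmdeg : m.natDegree = 2 * k := by
    rw [hm, natDegree_prod _ _ fun i _ => hmne i]
    simp [natDegree_X_sub_C]
  have hmeval : ∀ l, m.eval (α l) = 0 := by
    intro l
    rw [hm, eval_prod]
    refine Finset.prod_eq_zero (mem_univ l) ?_
    simp
  set Q : Fin (2 * k) → Polynomial F :=
    fun i => ∑ t ∈ range (2 * k + 1), C (m.coeff t) *
      (∑ j ∈ range t, C (α i ^ (t - 1 - j)) * X ^ j) with hQ
  have hQm : ∀ i, Q i * (X - C (α i)) = m := by
    intro i
    have h1 : ∀ t : ℕ, (∑ j ∈ range t, C (α i ^ (t - 1 - j)) * X ^ j)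
        = ∑ j ∈ range t, X ^ j * (C (α i)) ^ (t - 1 - j) := by
      intro t
      refine Finset.sum_congr rfl fun j _ => ?_
      rw [C_pow, mul_comm]
    calc Q i * (X - C (α i))
        = ∑ t ∈ range (2 * k + 1), C (m.coeff t) *
            ((∑ j ∈ range t, X ^ j * (C (α i)) ^ (t - 1 - j)) * (X - C (α i))) := by
          rw [hQ, Finset.sum_mul]
          exact Finset.sum_congr rfl fun t _ => by rw [h1, mul_assoc]
      _ = ∑ t ∈ range (2 * k + 1), C (m.coeff t) * (X ^ t - (C (α i)) ^ t) := by
          exact Finset.sum_congr rfl fun t _ => by rw [geom_sum₂_mul]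
      _ = (∑ t ∈ range (2 * k + 1), C (m.coeff t) * X ^ t)
            - ∑ t ∈ range (2 * k + 1), C (m.coeff t) * (C (α i)) ^ t := by
          rw [← Finset.sum_sub_distrib]
          exact Finset.sum_congr rfl fun t _ => by ring
      _ = m - C (m.eval (α i)) := by
          congr 1
          · conv_rhs => rw [m.as_sum_range' (2 * k + 1) (by omega)]
            exact Finset.sum_congr rfl fun t _ => by rw [C_mul_X_pow_eq_monomial]
          · rw [eval_eq_sum_range' (n := 2 * k + 1) (by omega)]
            rw [map_sum]
            exact Finset.sum_congr rfl fun t _ => by rw [map_mul, map_pow]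
      _ = m := by rw [hmeval, map_zero, sub_zero]
  have hQprod : ∀ i, Q i = ∏ j ∈ univ.erase i, (X - C (α j)) := by
    intro i
    have h2 : (X - C (α i)) * Q i = (X - C (α i)) * ∏ j ∈ univ.erase i, (X - C (α j)) := by
      rw [mul_comm (X - C (α i)) (Q i), hQm, hm]
      exact (Finset.mul_prod_erase univ _ (mem_univ i)).symm
    exact mul_left_cancel₀ (hmne i) h2
  have hQcoeff : ∀ i (e : ℕ), (Q i).coeff e
      = ∑ t ∈ range (2 * k + 1), m.coeff t * (if e < t then α i ^ (t - 1 - e) else 0) := by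
    intro i e
    rw [hQ, finset_sum_coeff]
    refine Finset.sum_congr rfl fun t _ => ?_
    rw [coeff_C_mul, finset_sum_coeff]
    congr 1
    have : ∀ j ∈ range t, (C (α i ^ (t - 1 - j)) * X ^ j).coeff e
        = if e = j then α i ^ (t - 1 - j) else 0 := by
      intro j _
      rw [coeff_C_mul, coeff_X_pow]
      simp
    rw [Finset.sum_congr rfl this, Finset.sum_ite_eq (range t) e (fun j => α i ^ (t - 1 - j))]
    simp [Finset.mem_range]
  set g : ℕ → Polynomial F := fun b => ∑ i, C (u i * α i ^ (b * q)) * Q i with hg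
  have hgz : ∀ b (e : ℕ),
      (∀ t ∈ range (2 * k + 1), e < t → (∑ i, u i * α i ^ (b * q + (t - 1 - e))) = 0) →
      (g b).coeff e = 0 := by
    intro b e hrel
    rw [hg]
    simp only [finset_sum_coeff, coeff_C_mul, hQcoeff, Finset.mul_sum]
    rw [Finset.sum_comm]
    refine Finset.sum_eq_zero fun t ht => ?_
    by_cases hc : e < t
    · simp only [hc, if_true]
      calc ∑ i, u i * α i ^ (b * q) * (m.coeff t * α i ^ (t - 1 - e))
          = m.coeff t * ∑ i, u i * α i ^ (b * q + (t - 1 - e)) := by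
            rw [Finset.mul_sum]
            exact Finset.sum_congr rfl fun i _ => by rw [pow_add]; ring
        _ = 0 := by rw [hrel t ht hc, mul_zero]
    · simp [hc]
  set Pi : Fin (2 * k) → F := fun l => ∏ j ∈ univ.erase l, (α l - α j) with hPi
  have hPine : ∀ l, Pi l ≠ 0 := by
    intro l
    rw [hPi]
    refine Finset.prod_ne_zero_iff.mpr fun j hj => ?_
    exact sub_ne_zero.mpr fun hlj => (Finset.mem_erase.mp hj).1 (hα hlj).symm
  have hgeval : ∀ b l, (g b).eval (α l) = (u l * Pi l) * α l ^ (b * q) := by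
    intro b l
    rw [hg, eval_finset_sum]
    rw [Finset.sum_eq_single l]
    · rw [eval_mul, eval_C, hQprod, eval_prod]
      simp only [eval_sub, eval_X, eval_C, hPi]
      ring
    · intro i _ hil
      rw [eval_mul, hQprod, eval_prod]
      have : l ∈ univ.erase i := Finset.mem_erase.mpr ⟨fun h => hil h.symm, mem_univ l⟩
      rw [Finset.prod_eq_zero this (by simp), mul_zero]
    · intro h
      exact absurd (mem_univ l) h
  have hl0 : (0 : ℕ) < 2 * k := by omega
  set l0 : Fin (2 * k) := ⟨0, hl0⟩ with hl0def
  by_cases hqk' : q ≤ k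
  · -- small q: all exponents < n are covered; g 0 = 0 but g 0 (α l0) ≠ 0
    have hcov : ∀ e : ℕ, e < 2 * k → ∑ i, u i * α i ^ e = 0 := by
      intro e he
      have hq0 : 0 < q := by omega
      have h1 : e % q < k := lt_of_lt_of_le (Nat.mod_lt _ hq0) hqk'
      have h2 : e / q < k := by
        rw [Nat.div_lt_iff_lt_mul hq0]
        calc e < 2 * k := he
          _ = k * 2 := by omega
          _ ≤ k * q := Nat.mul_le_mul_left k hq2
      have h3 := rel (e % q) (e / q) h1 h2
      rwa [Nat.mod_add_div'] at h3
    have hg0 : g 0 = 0 := by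
      apply Polynomial.ext
      intro e
      rw [coeff_zero]
      refine hgz 0 e fun t ht hc => ?_
      have h4 : 0 * q + (t - 1 - e) < 2 * k := by
        rw [Finset.mem_range] at ht
        omega
      simpa using hcov _ h4
    have h5 := hgeval 0 l0
    rw [hg0, eval_zero, Nat.zero_mul, pow_zero, mul_one] at h5
    exact mul_ne_zero (hu l0) (hPine l0) h5.symm
  · -- large q: k < q ≤ 2k - 2
    push_neg at hqk'
    have hk3 : 3 ≤ k := by omega
    have hgdeg : ∀ b, b < k → (g b).natDegree ≤ k - 1 := by
      intro b hb
      rw [natDegree_le_iff_coeff_eq_zero]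
      intro N hN
      refine hgz b N fun t ht hc => ?_
      rw [Finset.mem_range] at ht
      have h1 : t - 1 - N < k := by omega
      have h2 := rel (t - 1 - N) b h1 hb
      rwa [Nat.add_comm] at h2
    have hvanish : ∀ p : Polynomial F, p.natDegree < 2 * k → (∀ l, p.eval (α l) = 0) → p = 0 := by
      intro p hd hev
      exact Polynomial.eq_zero_of_natDegree_lt_card_of_eval_eq_zero p hα hev
        (by rwa [Fintype.card_fin])
    have claim1 : ∀ b : ℕ, 1 ≤ b → b + 1 < k → g 1 * g b = g (b + 1) * g 0 := by
      intro b hb1 hbk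
      have hsub : g 1 * g b - g (b + 1) * g 0 = 0 := by
        refine hvanish _ ?_ ?_
        · refine lt_of_le_of_lt (natDegree_sub_le _ _) (max_lt ?_ ?_)
          · exact lt_of_le_of_lt natDegree_mul_le
              (by have := hgdeg 1 (by omega); have := hgdeg b (by omega); omega)
          · exact lt_of_le_of_lt natDegree_mul_le
              (by have := hgdeg (b + 1) (by omega); have := hgdeg 0 (by omega); omega)
        · intro l
          rw [eval_sub, eval_mul, eval_mul, hgeval, hgeval, hgeval, hgeval]
          ring
      exact sub_eq_zero.mp hsub
    have claim2 : ∀ j : ℕ, j + 1 < k → g 1 ^ (j + 1) = g (j + 1) * g 0 ^ j := by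
      intro j
      induction j with
      | zero => intro _; simp
      | succ j ih =>
        intro hj
        have h1 := ih (by omega)
        have h2 := claim1 (j + 1) (by omega) hj
        calc g 1 ^ (j + 1 + 1) = g 1 * g 1 ^ (j + 1) := by ring
          _ = g 1 * (g (j + 1) * g 0 ^ j) := by rw [h1]
          _ = (g 1 * g (j + 1)) * g 0 ^ j := by ring
          _ = (g (j + 1 + 1) * g 0) * g 0 ^ j := by rw [h2]
          _ = g (j + 1 + 1) * g 0 ^ (j + 1) := by ring
    have hg0ne : g 0 ≠ 0 := by
      intro h
      have h5 := hgeval 0 l0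
      rw [h, eval_zero, Nat.zero_mul, pow_zero, mul_one] at h5
      exact mul_ne_zero (hu l0) (hPine l0) h5.symm
    have hg1ne : g 1 ≠ 0 := by
      have hl1 : (1 : ℕ) < 2 * k := by omega
      set l1 : Fin (2 * k) := ⟨1, hl1⟩ with hl1def
      have hne : α l0 ≠ α l1 := fun h => by
        have := hα h
        simp [hl0def, hl1def, Fin.ext_iff] at this
      obtain ⟨l, hl⟩ : ∃ l, α l ≠ 0 := by
        by_cases h0 : α l0 = 0
        · exact ⟨l1, fun h => hne (by rw [h0, h])⟩
        · exact ⟨l0, h0⟩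
      intro h
      have h5 := hgeval 1 l
      rw [h, eval_zero] at h5
      exact mul_ne_zero (mul_ne_zero (hu l) (hPine l)) (pow_ne_zero _ hl) h5.symm
    set c : Polynomial F := GCDMonoid.gcd (g 1) (g 0) with hc
    set A : Polynomial F := g 1 / c with hA
    set B : Polynomial F := g 0 / c with hB
    have hc0 : c ≠ 0 := gcd_ne_zero_of_right hg0ne
    have hcA : c * A = g 1 := EuclideanDomain.mul_div_cancel' hc0 (gcd_dvd_left _ _)
    have hcB : c * B = g 0 := EuclideanDomain.mul_div_cancel' hc0 (gcd_dvd_right _ _)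
    have hcop : IsCoprime A B := isCoprime_div_gcd_div_gcd hg0ne
    have hB0 : B ≠ 0 := right_div_gcd_ne_zero hg0ne
    -- key equation c * A^(k-1) = g (k-1) * B^(k-2)
    have hkey : c * A ^ (k - 2 + 1) = g (k - 2 + 1) * B ^ (k - 2) := by
      have h1 := claim2 (k - 2) (by omega)
      rw [← hcA, ← hcB] at h1
      have h2 : c ^ (k - 2) * (c * A ^ (k - 2 + 1))
          = c ^ (k - 2) * (g (k - 2 + 1) * B ^ (k - 2)) := by
        calc c ^ (k - 2) * (c * A ^ (k - 2 + 1)) = (c * A) ^ (k - 2 + 1) := by ring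
          _ = g (k - 2 + 1) * (c * B) ^ (k - 2) := h1
          _ = c ^ (k - 2) * (g (k - 2 + 1) * B ^ (k - 2)) := by ring
      exact mul_left_cancel₀ (pow_ne_zero _ hc0) h2
    have hdvd : B ^ (k - 2) ∣ c := by
      have hcop2 : IsCoprime (B ^ (k - 2)) (A ^ (k - 2 + 1)) := hcop.symm.pow
      refine hcop2.dvd_of_dvd_mul_right ⟨g (k - 2 + 1), ?_⟩
      rw [hkey]; ring
    have hdegB : B.natDegree ≤ 1 := by
      have h1 : (k - 2) * B.natDegree ≤ c.natDegree := by
        have := natDegree_le_of_dvd hdvd hc0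
        rwa [natDegree_pow] at this
      have h2 : c.natDegree + B.natDegree = (g 0).natDegree := by
        rw [← hcB, natDegree_mul hc0 hB0]
      have h3 : (g 0).natDegree ≤ k - 1 := hgdeg 0 (by omega)
      by_contra hgt
      push_neg at hgt
      have h4 : (k - 2) * 2 ≤ (k - 2) * B.natDegree := Nat.mul_le_mul_left _ hgt
      omega
    have hdegA : A.natDegree ≤ k - 1 := by
      refine le_trans (natDegree_le_of_dvd ⟨c, by rw [← hcA]; ring⟩ hg1ne) (hgdeg 1 (by omega))
    have hceval : ∀ l, c.eval (α l) ≠ 0 := by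
      intro l h
      have h5 := hgeval 0 l
      rw [← hcB, eval_mul, h, zero_mul, Nat.zero_mul, pow_zero, mul_one] at h5
      exact mul_ne_zero (hu l) (hPine l) h5.symm
    have hABeval : ∀ l, B.eval (α l) * α l ^ q = A.eval (α l) := by
      intro l
      have e1 : c.eval (α l) * A.eval (α l) = (u l * Pi l) * α l ^ (1 * q) := by
        rw [← eval_mul, hcA, hgeval]
      have e2 : c.eval (α l) * B.eval (α l) = (u l * Pi l) * α l ^ (0 * q) := by
        rw [← eval_mul, hcB, hgeval]
      refine mul_left_cancel₀ (hceval l) ?_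
      calc c.eval (α l) * (B.eval (α l) * α l ^ q)
          = (c.eval (α l) * B.eval (α l)) * α l ^ q := by ring
        _ = (u l * Pi l) * α l ^ (1 * q) := by
            rw [e2, Nat.zero_mul, pow_zero, mul_one, Nat.one_mul]
        _ = c.eval (α l) * A.eval (α l) := e1.symm
    set P : Polynomial F := B * X ^ q - A with hP
    have hPdeg : P.natDegree < 2 * k := by
      refine lt_of_le_of_lt (natDegree_sub_le _ _) (max_lt ?_ ?_)
      · refine lt_of_le_of_lt natDegree_mul_le ?_
        rw [natDegree_X_pow]
        omega
      · omega
    have hP0 : P = 0 := by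
      refine hvanish P hPdeg fun l => ?_
      rw [hP, eval_sub, eval_mul, eval_pow, eval_X, hABeval, sub_self]
    have hcoeff : P.coeff (B.natDegree + q) = B.leadingCoeff := by
      have hAz : A.coeff (B.natDegree + q) = 0 := coeff_eq_zero_of_natDegree_lt (by omega)
      rw [hP, coeff_sub, coeff_mul_X_pow, hAz, sub_zero]
      rfl
    rw [hP0, coeff_zero] at hcoeff
    exact hB0 (leadingCoeff_eq_zero.mp hcoeff.symm)

/-- If `GRS_{2k,k}(α, v)` over `F_{q²}` is Hermitian self-dual,
then `n = 2k ≤ q + 1`; i.e. no Hermitian self-dual GRS codes of length `> q + 1`. -/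
theorem stmt6 {F : Type*} [Field F] [Fintype F] (q k : ℕ)
    (hq : IsPrimePow q) (hcard : Fintype.card F = q ^ 2)
    (α : Fin (2 * k) → F) (hα : Function.Injective α)
    (v : Fin (2 * k) → F) (hv : ∀ l, v l ≠ 0)
    (hsd : IsHermitianSelfDual q (2 * k) (GRScode (2 * k) k α v)) :
    2 * k ≤ q + 1 := by
  by_contra hlt
  push_neg at hlt
  have hq2 : 2 ≤ q := hq.two_le
  have hqk : q + 2 ≤ 2 * k := by omega
  have hmem : ∀ e : ℕ, e < k → (fun i => v i * α i ^ e) ∈ GRScode (2 * k) k α v := by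
    intro e he
    refine ⟨Polynomial.X ^ e, ?_, fun i => by simp⟩
    rw [Polynomial.degree_X_pow]
    exact_mod_cast he
  have rel : ∀ a b : ℕ, a < k → b < k →
      ∑ i, (v i ^ (q + 1)) * α i ^ (a + b * q) = 0 := by
    intro a b ha hb
    have h1 := hmem a ha
    rw [IsHermitianSelfDual] at hsd
    rw [hsd] at h1
    have h2 := h1 _ (hmem b hb)
    calc ∑ i, (v i ^ (q + 1)) * α i ^ (a + b * q)
        = ∑ i, (v i * α i ^ a) * (v i * α i ^ b) ^ q := by
          exact Finset.sum_congr rfl fun i _ => by ring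
      _ = 0 := h2
  exact grs_core q k hq2 hqk α hα _ (fun l => pow_ne_zero _ (hv l)) rel
end

section
/- Let q be a prime power, let F_{q^2} be the finite field with q^2 elements, let n = 2k with n = q + 1, let α = (α_1, ..., α_n) be a vector of n distinct elements of F_{q^2}, and let v = (v_1, ..., v_n) ∈ (F_{q^2}^*)^n. If the generalized Reed–Solomon code GRS_{n,k}(α, v) is Hermitian self-dual, then there exist a ∈ F_{q^2} and b ∈ F_q^* (a nonzero element of the subfield F_q) such that (α_i + a)^{q+1} = b for every i = 1, ..., n; that is, α_1, ..., α_n are exactly the q+1 roots of (x + a)^{q+1} = b. -/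
open Finset Polynomial

/-- A nonzero quadratic has at most two roots (contrapositive form). -/
lemma quad3_aux {F : Type*} [Field F] {A B C x y z : F}
    (hxy : x ≠ y) (hxz : x ≠ z) (hyz : y ≠ z)
    (hx : A * (x * x) + B * x + C = 0) (hy : A * (y * y) + B * y + C = 0)
    (hz : A * (z * z) + B * z + C = 0) : A = 0 := by
  have h1 : (x - y) * (A * (x + y) + B) = 0 := by linear_combination hx - hy
  have h2 : (x - z) * (A * (x + z) + B) = 0 := by linear_combination hx - hz
  have h1' : A * (x + y) + B = 0 :=
    (mul_eq_zero.mp h1).resolve_left (sub_ne_zero.mpr hxy)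
  have h2' : A * (x + z) + B = 0 :=
    (mul_eq_zero.mp h2).resolve_left (sub_ne_zero.mpr hxz)
  have h3 : A * (y - z) = 0 := by linear_combination h1' - h2'
  exact (mul_eq_zero.mp h3).resolve_right (sub_ne_zero.mpr hyz)

/-- If `n = 2k = q + 1` and `GRS_{n,k}(α, v)` over `F_{q²}` is
Hermitian self-dual, then there are `a ∈ F_{q²}` and a nonzero `b` in the
subfield `F_q` such that `(αᵢ + a)^{q+1} = b` for every `i`. -/
theorem stmt7 {F : Type*} [Field F] [Fintype F] (q k : ℕ)
    (hq : IsPrimePow q) (hcard : Fintype.card F = q ^ 2)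
    (hn : 2 * k = q + 1)
    (α : Fin (2 * k) → F) (hα : Function.Injective α)
    (v : Fin (2 * k) → F) (hv : ∀ l, v l ≠ 0)
    (hsd : IsHermitianSelfDual q (2 * k) (GRScode (2 * k) k α v)) :
    ∃ a b : F, b ≠ 0 ∧ b ^ q = b ∧ ∀ i, (α i + a) ^ (q + 1) = b := by
  classical
  obtain ⟨p, m, hp, hm, hpm⟩ := hq
  have hp' : p.Prime := hp.nat_prime
  have hq2 : 2 ≤ q := by
    have : 2 ≤ p := hp'.two_le
    calc 2 ≤ p := this
    _ ≤ p ^ m := Nat.le_self_pow (by omega) p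
    _ = q := hpm
  have hk2 : 2 ≤ k := by omega
  have hq3 : 3 ≤ q := by omega
  have hq0 : q ≠ 0 := by omega
  -- characteristic
  have hchar : CharP F p := by
    have h1 : CharP F (ringChar F) := ringChar.charP F
    have h2 : (ringChar F).Prime := CharP.char_is_prime F (ringChar F)
    obtain ⟨nn, -, hcardr⟩ := FiniteField.card F (ringChar F)
    have hdvd : p ∣ ringChar F ^ (nn : ℕ) := by
      rw [← hcardr, hcard, ← hpm, ← pow_mul]
      exact dvd_pow_self p (by omega)
    have : p = ringChar F := by
      have := hp'.dvd_of_dvd_pow hdvd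
      exact ((Nat.prime_dvd_prime_iff_eq hp' h2).mp this)
    rwa [this]
  haveI : Fact p.Prime := ⟨hp'⟩
  have hadd : ∀ x y : F, (x + y) ^ q = x ^ q + y ^ q := by
    intro x y; rw [← hpm]; exact add_pow_char_pow x y p m
  have hsub : ∀ x y : F, (x - y) ^ q = x ^ q - y ^ q := by
    intro x y; rw [← hpm]; exact sub_pow_char_pow x y m
  have hxq : ∀ x : F, x ^ (q * q) = x := by
    intro x
    have h := FiniteField.pow_card x
    rwa [hcard, pow_two] at h
  -- the weights
  set u : Fin (2 * k) → F := fun l => v l ^ (q + 1) with hu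
  have hu0 : ∀ l, u l ≠ 0 := fun l => pow_ne_zero _ (hv l)
  rw [IsHermitianSelfDual] at hsd
  -- Step 1: orthogonality for products of linear factors
  have hO : ∀ S T : Finset (Fin (2 * k)), S.card < k → T.card < k →
      ∑ l, u l * ((∏ s ∈ S, (α l - α s)) * (∏ t ∈ T, (α l - α t)) ^ q) = 0 := by
    intro S T hS hT
    set f : Polynomial F := ∏ s ∈ S, (X - C (α s)) with hf
    set g : Polynomial F := ∏ t ∈ T, (X - C (α t)) with hg
    have hdeg : ∀ (W : Finset (Fin (2 * k))), W.card < k →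
        (∏ s ∈ W, (X - C (α s)) : Polynomial F).degree < (k : WithBot ℕ) := by
      intro W hW
      have h1 : (∏ s ∈ W, (X - C (α s)) : Polynomial F).natDegree = W.card := by
        rw [Polynomial.natDegree_prod _ _ (fun s _ => X_sub_C_ne_zero (α s))]
        simp [Polynomial.natDegree_X_sub_C]
      calc (∏ s ∈ W, (X - C (α s)) : Polynomial F).degree
          ≤ ((∏ s ∈ W, (X - C (α s)) : Polynomial F).natDegree : WithBot ℕ) :=
            Polynomial.degree_le_natDegree
      _ = (W.card : WithBot ℕ) := by rw [h1]
      _ < (k : WithBot ℕ) := by exact_mod_cast hW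
    have hxmem : (fun l => v l * f.eval (α l)) ∈ GRScode (2 * k) k α v :=
      ⟨f, hdeg S hS, fun l => rfl⟩
    have hymem : (fun l => v l * g.eval (α l)) ∈ GRScode (2 * k) k α v :=
      ⟨g, hdeg T hT, fun l => rfl⟩
    rw [hsd] at hxmem
    have h0 := hxmem _ hymem
    rw [← h0]
    apply Finset.sum_congr rfl
    intro l _
    simp only [hf, hg, Polynomial.eval_prod, Polynomial.eval_sub, Polynomial.eval_X,
      Polynomial.eval_C, hu]
    rw [pow_succ]
    ring
  -- Step 2: the cross-ratio relation
  have hstar : ∀ i j pa pb : Fin (2 * k), i ≠ j → i ≠ pa → i ≠ pb → j ≠ pa → j ≠ pb → pa ≠ pb →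
      ((α i - α pa) * (α i - α pb) ^ q) * ((α j - α pb) * (α j - α pa) ^ q)
        = ((α i - α pb) * (α i - α pa) ^ q) * ((α j - α pa) * (α j - α pb) ^ q) := by
    intro i j pa pb hij hipa hipb hjpa hjpb hab
    set core : Finset (Fin (2 * k)) := univ \ {i, j, pa, pb} with hcore
    have hmemcore : ∀ l, l ∈ core ↔ l ≠ i ∧ l ≠ j ∧ l ≠ pa ∧ l ≠ pb := by
      intro l
      simp [hcore, mem_sdiff, mem_insert, not_or]
    have hcardcore : core.card = 2 * k - 4 := by
      rw [hcore, card_sdiff_of_subset (subset_univ _)]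
      have h4 : ({i, j, pa, pb} : Finset (Fin (2 * k))).card = 4 := by
        rw [card_insert_of_notMem (by simp [hij, hipa, hipb]),
          card_insert_of_notMem (by simp [hjpa, hjpb]),
          card_insert_of_notMem (by simp [hab]), card_singleton]
      rw [h4, card_univ, Fintype.card_fin]
    obtain ⟨S₀, hS₀sub, hS₀card⟩ :=
      Finset.exists_subset_card_eq (show k - 2 ≤ core.card by omega)
    set T₀ : Finset (Fin (2 * k)) := core \ S₀ with hT₀
    have hT₀card : T₀.card = k - 2 := by
      rw [hT₀, card_sdiff_of_subset hS₀sub, hcardcore, hS₀card]; omega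
    have hS₀core : ∀ l ∈ S₀, l ∈ core := fun l hl => hS₀sub hl
    have hT₀core : ∀ l ∈ T₀, l ∈ core := fun l hl => (mem_sdiff.mp hl).1
    have hpaS₀ : pa ∉ S₀ := fun h => (((hmemcore pa).mp (hS₀core pa h)).2.2.1) rfl
    have hpbS₀ : pb ∉ S₀ := fun h => (((hmemcore pb).mp (hS₀core pb h)).2.2.2) rfl
    have hpaT₀ : pa ∉ T₀ := fun h => (((hmemcore pa).mp (hT₀core pa h)).2.2.1) rfl
    have hpbT₀ : pb ∉ T₀ := fun h => (((hmemcore pb).mp (hT₀core pb h)).2.2.2) rfl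
    have hC1 : (insert pa S₀).card < k := by rw [card_insert_of_notMem hpaS₀, hS₀card]; omega
    have hC2 : (insert pb T₀).card < k := by rw [card_insert_of_notMem hpbT₀, hT₀card]; omega
    have hC3 : (insert pb S₀).card < k := by rw [card_insert_of_notMem hpbS₀, hS₀card]; omega
    have hC4 : (insert pa T₀).card < k := by rw [card_insert_of_notMem hpaT₀, hT₀card]; omega
    -- reduce each sum to the two surviving terms
    have hreduce : ∀ S T : Finset (Fin (2 * k)),
        (∀ l : Fin (2 * k), l ≠ i → l ≠ j → l ∈ S ∨ l ∈ T) →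
        (∑ l, u l * ((∏ s ∈ S, (α l - α s)) * (∏ t ∈ T, (α l - α t)) ^ q)) =
        u i * ((∏ s ∈ S, (α i - α s)) * (∏ t ∈ T, (α i - α t)) ^ q)
        + u j * ((∏ s ∈ S, (α j - α s)) * (∏ t ∈ T, (α j - α t)) ^ q) := by
      intro S T hcover
      refine Eq.trans
        ((Finset.sum_subset (Finset.subset_univ ({i, j} : Finset (Fin (2 * k)))) ?_).symm)
        (Finset.sum_pair hij)
      intro l _ hl
      simp only [mem_insert, mem_singleton, not_or] at hl
      rcases hcover l hl.1 hl.2 with h | h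
      · rw [Finset.prod_eq_zero h (sub_self (α l))]; ring
      · rw [Finset.prod_eq_zero h (sub_self (α l)), zero_pow hq0]; ring
    have hcover1 : ∀ l : Fin (2 * k), l ≠ i → l ≠ j → l ∈ insert pa S₀ ∨ l ∈ insert pb T₀ := by
      intro l h1 h2
      by_cases h3 : l = pa
      · exact Or.inl (by simp [h3])
      by_cases h4 : l = pb
      · exact Or.inr (by simp [h4])
      have hlc : l ∈ core := (hmemcore l).mpr ⟨h1, h2, h3, h4⟩
      by_cases h5 : l ∈ S₀
      · exact Or.inl (mem_insert_of_mem h5)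
      · exact Or.inr (mem_insert_of_mem (mem_sdiff.mpr ⟨hlc, h5⟩))
    have hcover2 : ∀ l : Fin (2 * k), l ≠ i → l ≠ j → l ∈ insert pb S₀ ∨ l ∈ insert pa T₀ := by
      intro l h1 h2
      by_cases h3 : l = pb
      · exact Or.inl (by simp [h3])
      by_cases h4 : l = pa
      · exact Or.inr (by simp [h4])
      have hlc : l ∈ core := (hmemcore l).mpr ⟨h1, h2, h4, h3⟩
      by_cases h5 : l ∈ S₀
      · exact Or.inl (mem_insert_of_mem h5)
      · exact Or.inr (mem_insert_of_mem (mem_sdiff.mpr ⟨hlc, h5⟩))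
    have h1 := hO (insert pa S₀) (insert pb T₀) hC1 hC2
    have h2 := hO (insert pb S₀) (insert pa T₀) hC3 hC4
    rw [hreduce _ _ hcover1] at h1
    rw [hreduce _ _ hcover2] at h2
    simp only [Finset.prod_insert hpaS₀, Finset.prod_insert hpbT₀,
      Finset.prod_insert hpbS₀, Finset.prod_insert hpaT₀] at h1 h2
    simp only [mul_pow] at h1 h2
    set Hi : F := ∏ s ∈ S₀, (α i - α s) with hHi
    set Hj : F := ∏ s ∈ S₀, (α j - α s) with hHj
    set Ei : F := ∏ t ∈ T₀, (α i - α t) with hEi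
    set Ej : F := ∏ t ∈ T₀, (α j - α t) with hEj
    have hHine : Hi ≠ 0 := by
      rw [hHi]
      apply Finset.prod_ne_zero_iff.mpr
      intro s hs
      exact sub_ne_zero.mpr (fun hh => (((hmemcore s).mp (hS₀core s hs)).1) (hα hh).symm)
    have hEine : Ei ≠ 0 := by
      rw [hEi]
      apply Finset.prod_ne_zero_iff.mpr
      intro s hs
      exact sub_ne_zero.mpr (fun hh => (((hmemcore s).mp (hT₀core s hs)).1) (hα hh).symm)
    have key : (u i * (Hi * Ei ^ q)) *
        (((α i - α pa) * (α i - α pb) ^ q) * ((α j - α pb) * (α j - α pa) ^ q)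
         - ((α i - α pb) * (α i - α pa) ^ q) * ((α j - α pa) * (α j - α pb) ^ q)) = 0 := by
      linear_combination ((α j - α pb) * (α j - α pa) ^ q) * h1
        - ((α j - α pa) * (α j - α pb) ^ q) * h2
    have hne : u i * (Hi * Ei ^ q) ≠ 0 :=
      mul_ne_zero (hu0 i) (mul_ne_zero hHine (pow_ne_zero _ hEine))
    exact sub_eq_zero.mp ((mul_eq_zero.mp key).resolve_left hne)
  -- Step 3: fixed indices and the constant c
  have h0lt : 0 < 2 * k := by omega
  have h1lt : 1 < 2 * k := by omega
  have h2lt : 2 < 2 * k := by omega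
  set i0 : Fin (2 * k) := ⟨0, h0lt⟩ with hi0
  set i1 : Fin (2 * k) := ⟨1, h1lt⟩ with hi1
  set i2 : Fin (2 * k) := ⟨2, h2lt⟩ with hi2
  have h01 : i0 ≠ i1 := by simp [hi0, hi1, Fin.ext_iff]
  have h02 : i0 ≠ i2 := by simp [hi0, hi2, Fin.ext_iff]
  have h12 : i1 ≠ i2 := by simp [hi1, hi2, Fin.ext_iff]
  have hαne : ∀ a b : Fin (2 * k), a ≠ b → α a - α b ≠ 0 :=
    fun a b hab => sub_ne_zero.mpr (fun hh => hab (hα hh))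
  have ht2 : (α i2 - α i1) * (α i2 - α i0) ^ q ≠ 0 :=
    mul_ne_zero (hαne i2 i1 h12.symm) (pow_ne_zero _ (hαne i2 i0 h02.symm))
  obtain ⟨c, hcdef⟩ : ∃ c : F,
      c = ((α i2 - α i0) * (α i2 - α i1) ^ q) / ((α i2 - α i1) * (α i2 - α i0) ^ q) := ⟨_, rfl⟩
  have hc : ∀ i, i ≠ i0 → i ≠ i1 →
      (α i - α i0) * (α i - α i1) ^ q = c * ((α i - α i1) * (α i - α i0) ^ q) := by
    intro i h0 h1
    by_cases h2 : i = i2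
    · subst h2
      rw [hcdef, div_mul_eq_mul_div, eq_div_iff ht2]
    · have hs := hstar i i2 i0 i1 h2 h0 h1 h02.symm h12.symm h01
      rw [hcdef, div_mul_eq_mul_div, eq_div_iff ht2]
      linear_combination hs
  have hrel : ∀ i, (α i - α i0) * ((α i) ^ q - (α i1) ^ q)
      = c * ((α i - α i1) * ((α i) ^ q - (α i0) ^ q)) := by
    intro i
    by_cases h0 : i = i0
    · subst h0; simp
    by_cases h1 : i = i1
    · subst h1; simp
    have h := hc i h0 h1
    rwa [hsub (α i) (α i1), hsub (α i) (α i0)] at h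
  -- case distinction on c
  by_cases hc1 : c = 1
  · -- degenerate case: impossible
    exfalso
    rw [hc1] at hrel
    have hden : α i1 - α i0 ≠ 0 := hαne i1 i0 h01.symm
    have hlin : ∀ i, (α i1 - α i0) * (α i) ^ q
        = ((α i1) ^ q - (α i0) ^ q) * α i + (α i1 * (α i0) ^ q - α i0 * (α i1) ^ q) := by
      intro i
      linear_combination hrel i
    have hfro : ∀ jj : Fin (2 * k), (α i1 - α i0) * (α i0 - α jj) ^ q
        = ((α i1) ^ q - (α i0) ^ q) * (α i0 - α jj) := by
      intro jj
      rw [hsub]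
      linear_combination hlin i0 - hlin jj
    -- all the q nonzero differences α i0 - α jj are (q-1)-st roots of lam
    obtain ⟨lam, hlam⟩ : ∃ lam : F, lam = ((α i1) ^ q - (α i0) ^ q) / (α i1 - α i0) := ⟨_, rfl⟩
    have hroot : ∀ jj : Fin (2 * k), jj ≠ i0 → (α i0 - α jj) ^ (q - 1) = lam := by
      intro jj hjj
      have hz : α i0 - α jj ≠ 0 := hαne i0 jj (Ne.symm hjj)
      have h1 : (α i0 - α jj) ^ q = lam * (α i0 - α jj) := by
        rw [hlam, div_mul_eq_mul_div, eq_div_iff hden]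
        linear_combination hfro jj
      have h2 : (α i0 - α jj) ^ (q - 1) * (α i0 - α jj) = lam * (α i0 - α jj) := by
        rw [← pow_succ, Nat.sub_add_cancel (by omega)]
        exact h1
      exact mul_right_cancel₀ hz h2
    set s : Finset F := (univ.erase i0).image (fun jj => α i0 - α jj) with hs
    have hscard : s.card = 2 * k - 1 := by
      rw [hs, Finset.card_image_of_injOn, card_erase_of_mem (mem_univ i0), card_univ,
        Fintype.card_fin]
      intro a _ b _ hab
      have hab' : α a = α b := by linear_combination -hab
      exact hα hab'
    have hsub2 : s ⊆ (Polynomial.nthRoots (q - 1) lam).toFinset := by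
      intro z hz
      rw [hs, Finset.mem_image] at hz
      obtain ⟨jj, hjj, rfl⟩ := hz
      rw [Multiset.mem_toFinset, Polynomial.mem_nthRoots (by omega : 0 < q - 1)]
      exact hroot jj (Finset.ne_of_mem_erase hjj)
    have hcard2 : s.card ≤ q - 1 := by
      calc s.card ≤ (Polynomial.nthRoots (q - 1) lam).toFinset.card :=
            Finset.card_le_card hsub2
      _ ≤ Multiset.card (Polynomial.nthRoots (q - 1) lam) := Multiset.toFinset_card_le _
      _ ≤ q - 1 := Polynomial.card_nthRoots _ _
    omega
  · -- main case
    have h1c : (1 : F) - c ≠ 0 := sub_ne_zero.mpr (Ne.symm hc1)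
    obtain ⟨d, hd⟩ : ∃ d : F, d = (c * α i1 - α i0) / (1 - c) := ⟨_, rfl⟩
    obtain ⟨a, ha⟩ : ∃ a : F, a = (c * (α i0) ^ q - (α i1) ^ q) / (1 - c) := ⟨_, rfl⟩
    obtain ⟨e, he⟩ : ∃ e : F,
      e = (α i0 * (α i1) ^ q - c * α i1 * (α i0) ^ q) / (1 - c) := ⟨_, rfl⟩
    have hdd : (1 - c) * d = c * α i1 - α i0 := by rw [hd]; field_simp
    have haa : (1 - c) * a = c * (α i0) ^ q - (α i1) ^ q := by rw [ha]; field_simp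
    have hee : (1 - c) * e = α i0 * (α i1) ^ q - c * α i1 * (α i0) ^ q := by
      rw [he]; field_simp
    have hcube : ∀ i, (α i) ^ q * α i + d * (α i) ^ q + a * α i + e = 0 := by
      intro i
      have h2 : (1 - c) * ((α i) ^ q * α i + d * (α i) ^ q + a * α i + e) = 0 := by
        linear_combination hrel i + (α i) ^ q * hdd + (α i) * haa + hee
      exact (mul_eq_zero.mp h2).resolve_left h1c
    have hcube2 : ∀ i, α i * (α i) ^ q + d ^ q * α i + a ^ q * (α i) ^ q + e ^ q = 0 := by
      intro i
      have h : ((α i) ^ q * α i) ^ q + (d * (α i) ^ q) ^ q + (a * α i) ^ q + e ^ q = 0 := by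
        rw [← hadd, ← hadd, ← hadd, hcube i, zero_pow hq0]
      have hpi : ((α i) ^ q) ^ q = α i := by rw [← pow_mul]; exact hxq (α i)
      simp only [mul_pow] at h
      rw [hpi] at h
      linear_combination h
    have hdiff : ∀ i, (d - a ^ q) * (α i) ^ q + (a - d ^ q) * α i + (e - e ^ q) = 0 := by
      intro i
      linear_combination hcube i - hcube2 i
    by_cases hda : d = a ^ q
    · -- conclusion
      have hdq : d ^ q = a := by
        rw [hda, ← pow_mul]; exact hxq a
      have heq : e ^ q = e := by
        linear_combination (α i0) ^ q * hda - α i0 * hdq - hdiff i0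
      refine ⟨d, d ^ (q + 1) - e, ?_, ?_, ?_⟩
      · -- b ≠ 0
        intro hb
        have hroots : ∀ i, (α i + d) ^ (q + 1) = 0 := by
          intro i
          have hexp : (α i + d) ^ (q + 1) = ((α i) ^ q + d ^ q) * (α i + d) := by
            rw [pow_succ, hadd]
          rw [hexp, ← hb, pow_succ]
          linear_combination hcube i + α i * hdq
        have h0' : α i0 + d = 0 := pow_eq_zero_iff (by omega) |>.mp (hroots i0)
        have h1' : α i1 + d = 0 := pow_eq_zero_iff (by omega) |>.mp (hroots i1)
        have : α i0 = α i1 := by linear_combination h0' - h1'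
        exact h01 (hα this)
      · -- b ^ q = b
        have hdp : (d ^ (q + 1)) ^ q = d ^ (q + 1) := by
          rw [← pow_mul]
          have he1 : (q + 1) * q = q * q + q := by ring
          rw [he1, pow_add, hxq, pow_succ]
          ring
        rw [hsub, hdp, heq]
      · -- the roots
        intro i
        have hexp : (α i + d) ^ (q + 1) = ((α i) ^ q + d ^ q) * (α i + d) := by
          rw [pow_succ, hadd]
        rw [hexp, pow_succ]
        linear_combination hcube i + α i * hdq
    · -- impossible subcase
      exfalso
      have hquad : ∀ i, (d ^ q - a) * (α i * α i)
          + ((e ^ q - e) + d * (d ^ q - a) + a * (d - a ^ q)) * α i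
          + (d * (e ^ q - e) + e * (d - a ^ q)) = 0 := by
        intro i
        linear_combination (d - a ^ q) * hcube i - (α i + d) * hdiff i
      have hA : d ^ q - a = 0 :=
        quad3_aux (fun hh => h01 (hα hh)) (fun hh => h02 (hα hh)) (fun hh => h12 (hα hh))
          (hquad i0) (hquad i1) (hquad i2)
      have ha' : a = d ^ q := by linear_combination -hA
      exact hda (by rw [ha', ← pow_mul, hxq])
end

section
/- Let q be a prime power, let F_{q^2} be the finite field with q^2 elements, let n = 2k with n ≤ q, let α = (α_1, ..., α_n) be a vector of n distinct elements of F_{q^2}, and let v = (v_1, ..., v_n) ∈ (F_{q^2}^*)^n. If the generalized Reed–Solomon code GRS_{n,k}(α, v) is Hermitian self-dual, then one of the following holds: (a) there exist a ∈ F_{q^2} and b ∈ F_q^* (a nonzero element of the subfield F_q) such that (α_i + a)^{q+1} = b for every i = 1, ..., n; or (b) there exist a, b ∈ F_{q^2} such that α_i^q = a·α_i + b for every i = 1, ..., n. -/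
open Finset

open Polynomial


noncomputable def polyOf {F : Type*} [Field F] {m : ℕ} (d : Fin m → F) : Polynomial F :=
  ∑ t : Fin m, C (d t) * X ^ (t : ℕ)

lemma polyOf_eval {F : Type*} [Field F] {m : ℕ} (d : Fin m → F) (x : F) :
    (polyOf d).eval x = ∑ t : Fin m, d t * x ^ (t : ℕ) := by
  simp [polyOf, eval_finset_sum]

lemma polyOf_degree {F : Type*} [Field F] {m : ℕ} (d : Fin m → F) :
    (polyOf d).degree < (m : WithBot ℕ) := by
  apply lt_of_le_of_lt (degree_sum_le _ _)
  rw [Finset.sup_lt_iff (by exact_mod_cast WithBot.bot_lt_coe m)]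
  intro t _
  apply lt_of_le_of_lt (degree_C_mul_X_pow_le _ _)
  exact_mod_cast t.2

lemma polyOf_coeff {F : Type*} [Field F] {m : ℕ} (d : Fin m → F) (t : Fin m) :
    (polyOf d).coeff (t : ℕ) = d t := by
  rw [polyOf, finset_sum_coeff]
  rw [Finset.sum_eq_single t]
  · simp
  · intro s _ hst
    rw [coeff_C_mul, coeff_X_pow, if_neg (by simpa [Fin.val_eq_val, eq_comm] using hst), mul_zero]
  · simp

lemma coeff_basis_top {F : Type*} [Field F] {n : ℕ} (α : Fin n → F)
    (hα : Function.Injective α) (hn : 1 ≤ n) (i : Fin n) :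
    (Lagrange.basis Finset.univ α i).coeff (n - 1) =
      (∏ j ∈ Finset.univ.erase i, (α i - α j))⁻¹ := by
  rw [Lagrange.basis]
  have : ∀ j ∈ Finset.univ.erase i, Lagrange.basisDivisor (α i) (α j)
      = C ((α i - α j)⁻¹) * (X - C (α j)) := fun j _ => rfl
  rw [Finset.prod_congr rfl this, Finset.prod_mul_distrib, ← map_prod]
  rw [Polynomial.coeff_C_mul]
  have hmonic : (∏ j ∈ Finset.univ.erase i, (X - C (α j))).Monic :=
    monic_prod_of_monic _ _ (fun j _ => monic_X_sub_C _)
  have hdeg : (∏ j ∈ Finset.univ.erase i, (X - C (α j))).natDegree = n - 1 := by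
    rw [natDegree_prod _ _ (fun j _ => X_sub_C_ne_zero _)]
    simp [Finset.card_erase_of_mem]
  rw [← hdeg, hmonic.coeff_natDegree, mul_one, ← Finset.prod_inv_distrib]

lemma residue {F : Type*} [Field F] {n : ℕ} (α : Fin n → F)
    (hα : Function.Injective α) (hn : 1 ≤ n)
    (f : Polynomial F) (hf : f.degree < (n - 1 : ℕ)) :
    ∑ i, f.eval (α i) * (∏ j ∈ Finset.univ.erase i, (α i - α j))⁻¹ = 0 := by
  have hinterp : f = Lagrange.interpolate Finset.univ α (fun i => f.eval (α i)) := by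
    apply Lagrange.eq_interpolate
    · exact Function.Injective.injOn hα
    · simpa using lt_of_lt_of_le hf (by exact_mod_cast Nat.sub_le n 1)
  have h0 : f.coeff (n - 1) = 0 :=
    coeff_eq_zero_of_degree_lt (by simpa using hf)
  rw [hinterp, Lagrange.interpolate_apply, Polynomial.finset_sum_coeff] at h0
  rw [← h0]
  apply Finset.sum_congr rfl
  intro i _
  rw [Polynomial.coeff_C_mul, coeff_basis_top α hα hn i]

lemma residue_pow {F : Type*} [Field F] {n : ℕ} (α : Fin n → F)
    (hα : Function.Injective α) (hn : 1 ≤ n) (e : ℕ) (he : e < n - 1) :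
    ∑ i, α i ^ e * (∏ j ∈ Finset.univ.erase i, (α i - α j))⁻¹ = 0 := by
  have := residue α hα hn (X ^ e) (by rw [Polynomial.degree_X_pow]; exact_mod_cast he)
  simpa using this

lemma dual_lemma {F : Type*} [Field F] {n k' : ℕ} (hk : k' < n)
    (α : Fin n → F) (hα : Function.Injective α) (c : Fin n → F)
    (H : ∀ s, s < k' → ∑ i, c i * α i ^ s = 0) :
    ∃ h : Polynomial F, h.degree < ((n - k' : ℕ) : WithBot ℕ) ∧
      ∀ i, c i * ∏ j ∈ Finset.univ.erase i, (α i - α j) = h.eval (α i) := by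
  classical
  set m := n - k' with hm
  have hkm : k' + m = n := by omega
  set W : Fin n → F := fun i => ∏ j ∈ Finset.univ.erase i, (α i - α j) with hWdef
  have hW : ∀ i, W i ≠ 0 := by
    intro i
    apply Finset.prod_ne_zero_iff.2
    intro j hj
    exact sub_ne_zero.2 fun hij => (Finset.mem_erase.1 hj).1 (hα hij.symm)
  set A : Matrix (Fin n) (Fin n) F := (Matrix.vandermonde α).transpose with hA
  have hdet : IsUnit A.det := by
    rw [Matrix.det_transpose, Matrix.det_vandermonde]
    apply IsUnit.mk0
    apply Finset.prod_ne_zero_iff.2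
    intro i _
    apply Finset.prod_ne_zero_iff.2
    intro j hj
    exact sub_ne_zero.2 fun hij => (Finset.mem_Ioi.1 hj).ne' (hα hij)
  set M : Matrix (Fin k') (Fin n) F := fun s i => α i ^ (s : ℕ) with hMdef
  set Φ := M.mulVecLin with hΦ
  have hΦapp : ∀ x s, Φ x s = ∑ i, x i * α i ^ (s : ℕ) := by
    intro x s
    rw [hΦ, Matrix.mulVecLin_apply]
    simp [hΦ, Matrix.mulVecLin, Matrix.mulVec, dotProduct, hMdef, mul_comm]
  have hsurj : Function.Surjective Φ := by
    intro y
    set yext : Fin n → F := fun j => if h : (j : ℕ) < k' then y ⟨j, h⟩ else 0 with hyext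
    refine ⟨A⁻¹.mulVec yext, ?_⟩
    funext s
    have hAx : A.mulVec (A⁻¹.mulVec yext) = yext := by
      rw [Matrix.mulVec_mulVec, Matrix.mul_nonsing_inv _ hdet, Matrix.one_mulVec]
    have h2 : Φ (A⁻¹.mulVec yext) s = A.mulVec (A⁻¹.mulVec yext) (Fin.castLE hk.le s) := by
      rw [hΦ, Matrix.mulVecLin_apply]
      simp [hΦ, Matrix.mulVecLin, Matrix.mulVec, dotProduct, hMdef, hA,
        Matrix.vandermonde, Matrix.transpose]
    rw [h2, hAx, hyext]
    simp
  have hkerrank : Module.finrank F (LinearMap.ker Φ) = m := by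
    have h1 := LinearMap.finrank_range_add_finrank_ker Φ
    rw [LinearMap.range_eq_top.2 hsurj] at h1
    simp only [finrank_top, Module.finrank_fintype_fun_eq_card, Fintype.card_fin] at h1
    omega
  set N : Matrix (Fin n) (Fin m) F := fun i t => (W i)⁻¹ * α i ^ (t : ℕ) with hNdef
  set Ψ := N.mulVecLin with hΨ
  have hΨapp : ∀ d i, Ψ d i = (W i)⁻¹ * ∑ t : Fin m, d t * α i ^ (t : ℕ) := by
    intro d i
    rw [hΨ, Matrix.mulVecLin_apply]
    simp only [hΨ, Matrix.mulVecLin_apply, Matrix.mulVec, dotProduct, hNdef,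
      Finset.mul_sum]
    apply Finset.sum_congr rfl
    intro t _
    ring
  have hΨinj : Function.Injective Ψ := by
    rw [injective_iff_map_eq_zero Ψ]
    intro d hd
    have hroots : ∀ i, (polyOf d).eval (α i) = 0 := by
      intro i
      have hdi := congrFun hd i
      rw [hΨapp] at hdi
      rcases mul_eq_zero.1 hdi with h | h
      · exact absurd h (inv_ne_zero (hW i))
      · rw [polyOf_eval]; exact h
    have hz : polyOf d = 0 := by
      apply Polynomial.eq_zero_of_natDegree_lt_card_of_eval_eq_zero _ hα hroots
      by_cases h0 : polyOf d = 0
      · rw [h0, Fintype.card_fin]; simp; omega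
      · rw [Fintype.card_fin]
        have hdd := polyOf_degree d
        rw [← Polynomial.natDegree_lt_iff_degree_lt h0] at hdd
        omega
    funext t
    rw [← polyOf_coeff d t, hz, Polynomial.coeff_zero]
    rfl
  have hle : LinearMap.range Ψ ≤ LinearMap.ker Φ := by
    rintro _ ⟨d, rfl⟩
    rw [LinearMap.mem_ker]
    funext s
    rw [hΦapp]
    have e1 : ∀ i, Ψ d i * α i ^ (s : ℕ)
        = ∑ t : Fin m, d t * (α i ^ ((s : ℕ) + (t : ℕ)) * (W i)⁻¹) := by
      intro i
      rw [hΨapp, Finset.mul_sum, Finset.sum_mul]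
      exact Finset.sum_congr rfl fun t _ => by rw [pow_add]; ring
    have swap : ∑ i, Ψ d i * α i ^ (s : ℕ)
        = ∑ t : Fin m, d t * ∑ i, α i ^ ((s : ℕ) + (t : ℕ)) * (W i)⁻¹ := by
      rw [Finset.sum_congr rfl (fun i _ => e1 i), Finset.sum_comm]
      exact Finset.sum_congr rfl fun t _ => (Finset.mul_sum _ _ _).symm
    rw [Pi.zero_apply, swap]
    apply Finset.sum_eq_zero
    intro t _
    have hs2 := s.2
    have ht2 := t.2
    rw [residue_pow α hα (by omega) _ (by omega), mul_zero]
  have heq : LinearMap.ker Φ = LinearMap.range Ψ := by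
    apply (Submodule.eq_of_le_of_finrank_le hle ?_).symm
    rw [hkerrank, LinearMap.finrank_range_of_inj hΨinj,
      Module.finrank_fintype_fun_eq_card, Fintype.card_fin]
  have hc : c ∈ LinearMap.ker Φ := by
    rw [LinearMap.mem_ker]
    funext s
    rw [Pi.zero_apply, hΦapp]
    exact H s s.2
  rw [heq] at hc
  obtain ⟨d, hd⟩ := hc
  refine ⟨polyOf d, polyOf_degree d, fun i => ?_⟩
  rw [← hd, hΨapp, polyOf_eval, mul_comm, ← mul_assoc, mul_inv_cancel₀ (hW i), one_mul]

/-- If `n = 2k ≤ q` and `GRS_{n,k}(α, v)` over `F_{q²}` is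
Hermitian self-dual, then either (a) there are `a ∈ F_{q²}` and a nonzero `b`
in the subfield `F_q` with `(αᵢ + a)^{q+1} = b` for all `i`, or (b) there are
`a, b ∈ F_{q²}` with `αᵢ^q = a·αᵢ + b` for all `i`. -/
theorem stmt8 {F : Type*} [Field F] [Fintype F] (q k : ℕ)
    (hq : IsPrimePow q) (hcard : Fintype.card F = q ^ 2)
    (hn : 2 * k ≤ q)
    (α : Fin (2 * k) → F) (hα : Function.Injective α)
    (v : Fin (2 * k) → F) (hv : ∀ l, v l ≠ 0)
    (hsd : IsHermitianSelfDual q (2 * k) (GRScode (2 * k) k α v)) :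
    (∃ a b : F, b ≠ 0 ∧ b ^ q = b ∧ ∀ i, (α i + a) ^ (q + 1) = b) ∨
    (∃ a b : F, ∀ i, α i ^ q = a * α i + b) := by
  classical
  -- basic facts about q and the field
  obtain ⟨pp, mm, hpp, hmm, hqpm⟩ := hq
  have hppn : pp.Prime := hpp.nat_prime
  haveI : Fact pp.Prime := ⟨hppn⟩
  have hq2 : 2 ≤ q := by
    rw [← hqpm]
    calc 2 ≤ pp := hppn.two_le
    _ = pp ^ 1 := (pow_one pp).symm
    _ ≤ pp ^ mm := Nat.pow_le_pow_right hppn.one_lt.le hmm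
  have hcharp : CharP F pp := by
    have hr : (ringChar F).Prime := CharP.char_is_prime F (ringChar F)
    obtain ⟨nn, -, hcardr⟩ := FiniteField.card F (ringChar F)
    have hpr : pp = ringChar F := by
      have hdvd : pp ∣ (ringChar F) ^ (nn : ℕ) := by
        rw [← hcardr, hcard, ← hqpm, ← pow_mul]
        exact dvd_pow_self pp (by positivity)
      exact ((Nat.prime_dvd_prime_iff_eq hppn hr).1 (hppn.dvd_of_dvd_pow hdvd))
    rw [hpr]
    exact ringChar.charP F
  haveI := hcharp
  haveI : ExpChar F pp := ExpChar.prime hppn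
  have hfrobadd : ∀ x y : F, (x + y) ^ q = x ^ q + y ^ q := by
    intro x y
    rw [← hqpm]
    exact add_pow_char_pow x y pp mm
  have hnegq : ∀ x : F, (-x) ^ q = -(x ^ q) := by
    intro x
    have h := hfrobadd x (-x)
    simp only [add_neg_cancel] at h
    have h0 : (0:F) ^ q = 0 := zero_pow (by omega)
    rw [h0] at h
    linear_combination -h
  have hqq : ∀ x : F, (x ^ q) ^ q = x := by
    intro x
    rw [← pow_mul, ← sq, ← hcard]
    exact FiniteField.pow_card x
  rcases Nat.lt_or_ge k 2 with hk2 | hk2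
  · -- k = 0 or k = 1 : conclusion (b) holds by interpolation
    right
    rcases Nat.lt_or_ge k 1 with hk0 | hk1
    · exact ⟨0, 0, fun i => absurd i.2 (by omega)⟩
    · have hk : k = 1 := by omega
      subst hk
      have h01 : (⟨0, by omega⟩ : Fin (2*1)) ≠ ⟨1, by omega⟩ := by
        simp [Fin.ext_iff]
      set x0 : F := α ⟨0, by omega⟩ with hx0
      set x1 : F := α ⟨1, by omega⟩ with hx1
      have hne : x0 - x1 ≠ 0 := sub_ne_zero.2 (fun h => h01 (hα h))
      refine ⟨(x0 ^ q - x1 ^ q) / (x0 - x1),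
        x0 ^ q - (x0 ^ q - x1 ^ q) / (x0 - x1) * x0, fun i => ?_⟩
      have hi : i = (⟨0, by omega⟩ : Fin (2*1)) ∨ i = ⟨1, by omega⟩ := by
        have h2 := i.2
        rcases (by omega : (i : ℕ) = 0 ∨ (i : ℕ) = 1) with h | h
        · exact Or.inl (Fin.ext h)
        · exact Or.inr (Fin.ext h)
      rcases hi with rfl | rfl
      · rw [← hx0]; field_simp; ring
      · rw [← hx1]; field_simp; ring
  -- main case : k ≥ 2
  have hk1 : 1 ≤ k := by omega
  set β : Fin (2*k) → F := fun i => α i ^ q with hβ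
  set u : Fin (2*k) → F := fun i => v i ^ (q+1) with huu
  set W : Fin (2*k) → F := fun i => ∏ j ∈ Finset.univ.erase i, (α i - α j) with hWdef
  have hu : ∀ i, u i ≠ 0 := fun i => pow_ne_zero _ (hv i)
  have hW : ∀ i, W i ≠ 0 := by
    intro i
    apply Finset.prod_ne_zero_iff.2
    intro j hj
    exact sub_ne_zero.2 fun hij => (Finset.mem_erase.1 hj).1 (hα hij.symm)
  have hβinj : Function.Injective β := by
    intro i j h
    apply hα
    have h2 := congrArg (· ^ q) h
    simp only [hβ] at h2 ⊢
    rwa [hqq, hqq] at h2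
  have hmem : ∀ s : ℕ, s < k → (fun i => v i * α i ^ s) ∈ GRScode (2*k) k α v := by
    intro s hs
    exact ⟨X ^ s, by rw [degree_X_pow]; exact_mod_cast hs, fun i => by simp⟩
  have Horth : ∀ s t : ℕ, s < k → t < k → ∑ i, u i * (α i ^ s * β i ^ t) = 0 := by
    intro s t hs ht
    have h1 := hsd ▸ hmem s hs
    have h2 := h1 (fun i => v i * α i ^ t) (hmem t ht)
    rw [← h2]
    apply Finset.sum_congr rfl
    intro i _
    have e : (v i * α i ^ t) ^ q = v i ^ q * (α i ^ q) ^ t := by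
      rw [mul_pow, ← pow_mul, mul_comm t q, pow_mul]
    simp only [e, hβ, huu, pow_succ]
    ring
  -- apply the dual lemma to get the polynomials h t
  have Hex : ∀ t : ℕ, t < k → ∃ hp : Polynomial F, hp.degree < ((2*k - k : ℕ) : WithBot ℕ) ∧
      ∀ i, (u i * β i ^ t) * W i = hp.eval (α i) := by
    intro t ht
    apply dual_lemma (by omega) α hα
    intro s hs
    rw [← Horth s t hs ht]
    apply Finset.sum_congr rfl
    intro i _
    ring
  choose hpoly hdeg0 heval0 using Hex
  set h : ℕ → Polynomial F := fun t => if ht : t < k then hpoly t ht else 1 with hhdef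
  have hdeg : ∀ t, t < k → (h t).degree < (k : WithBot ℕ) := by
    intro t ht
    have := hdeg0 t ht
    rw [hhdef]
    simp only [dif_pos ht]
    have h2 : 2*k - k = k := by omega
    rwa [h2] at this
  have heval : ∀ t, t < k → ∀ i, u i * β i ^ t * W i = (h t).eval (α i) := by
    intro t ht i
    rw [hhdef]
    simp only [dif_pos ht]
    exact heval0 t ht i
  have hnd : ∀ t, t < k → (h t).natDegree ≤ k - 1 := by
    intro t ht
    by_cases h0 : h t = 0
    · rw [h0]; simp
    · have := (Polynomial.natDegree_lt_iff_degree_lt h0).2 (hdeg t ht)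
      omega
  -- h t is nonzero
  have hne : ∀ t, t < k → h t ≠ 0 := by
    intro t ht h0
    have hi01 : (⟨0, by omega⟩ : Fin (2*k)) ≠ ⟨1, by omega⟩ := by simp [Fin.ext_iff]
    have hbne : β ⟨0, by omega⟩ ≠ β ⟨1, by omega⟩ := fun h => hi01 (hβinj h)
    have hex : ∃ i : Fin (2*k), β i ≠ 0 := by
      by_contra hc
      push_neg at hc
      exact hbne (by rw [hc, hc])
    obtain ⟨i, hbi⟩ := hex
    have := heval t ht i
    rw [h0, Polynomial.eval_zero] at this
    exact (mul_ne_zero (mul_ne_zero (hu i) (pow_ne_zero _ hbi)) (hW i)) this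
  -- multiplicative relations between the h t
  have hmul : ∀ t, t + 1 < k → h 1 * h t = h 0 * h (t+1) := by
    intro t ht
    have hsub : (h 1 * h t - h 0 * h (t+1)) = 0 := by
      apply Polynomial.eq_zero_of_natDegree_lt_card_of_eval_eq_zero _ hα
      · intro i
        rw [Polynomial.eval_sub, Polynomial.eval_mul, Polynomial.eval_mul,
          ← heval 1 (by omega) i, ← heval t (by omega) i,
          ← heval 0 (by omega) i, ← heval (t+1) (by omega) i]
        ring
      · rw [Fintype.card_fin]
        calc (h 1 * h t - h 0 * h (t+1)).natDegree
            ≤ max (h 1 * h t).natDegree ((h 0 * h (t+1)).natDegree) :=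
              Polynomial.natDegree_sub_le _ _
          _ < 2 * k := by
              have b1 := Polynomial.natDegree_mul_le (p := h 1) (q := h t)
              have b2 := Polynomial.natDegree_mul_le (p := h 0) (q := h (t+1))
              have := hnd 1 (by omega)
              have := hnd t (by omega)
              have := hnd 0 (by omega)
              have := hnd (t+1) (by omega)
              omega
    linear_combination hsub
  -- gcd decomposition h0 = d * P, h1 = d * R with P, R coprime
  set d : Polynomial F := GCDMonoid.gcd (h 0) (h 1) with hgcd
  set P : Polynomial F := h 0 / d with hPdef
  set R : Polynomial F := h 1 / d with hRdef
  have hcop : IsCoprime P R := isCoprime_div_gcd_div_gcd (hne 1 (by omega))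
  have hP0 : P ≠ 0 := left_div_gcd_ne_zero (hne 0 (by omega))
  have hR0 : R ≠ 0 := right_div_gcd_ne_zero (hne 1 (by omega))
  have hd0 : d ≠ 0 := gcd_ne_zero_of_left (hne 0 (by omega))
  have hdP : d * P = h 0 :=
    EuclideanDomain.mul_div_cancel' hd0 (gcd_dvd_left _ _)
  have hdR : d * R = h 1 :=
    EuclideanDomain.mul_div_cancel' hd0 (gcd_dvd_right _ _)
  -- the chain of relations
  have chain : ∀ t, t < k → h t * P ^ t = h 0 * R ^ t := by
    intro t
    induction t with
    | zero => intro _; simp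
    | succ t ih =>
      intro ht
      have ih' := ih (by omega)
      have hstep : P * h (t+1) = R * h t := by
        apply mul_left_cancel₀ hd0
        calc d * (P * h (t+1)) = (d * P) * h (t+1) := by ring
          _ = h 0 * h (t+1) := by rw [hdP]
          _ = h 1 * h t := (hmul t ht).symm
          _ = (d * R) * h t := by rw [hdR]
          _ = d * (R * h t) := by ring
      calc h (t+1) * P ^ (t+1) = (P * h (t+1)) * P ^ t := by ring
        _ = (R * h t) * P ^ t := by rw [hstep]
        _ = R * (h t * P ^ t) := by ring
        _ = R * (h 0 * R ^ t) := by rw [ih']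
        _ = h 0 * R ^ (t+1) := by ring
  -- at t = k - 1
  have hck : h (k-1) * P ^ (k-2) = d * R ^ (k-1) := by
    apply mul_right_cancel₀ hP0
    have e1 : h (k-1) * P ^ (k-1) = h 0 * R ^ (k-1) := chain (k-1) (by omega)
    calc h (k-1) * P ^ (k-2) * P = h (k-1) * P ^ (k-1) := by
          rw [mul_assoc, ← pow_succ]
          congr 2
          omega
      _ = h 0 * R ^ (k-1) := e1
      _ = (d * P) * R ^ (k-1) := by rw [hdP]
      _ = d * R ^ (k-1) * P := by ring
  have hdvd : P ^ (k-2) ∣ d := by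
    apply (hcop.pow (m := k-2) (n := k-1)).dvd_of_dvd_mul_right
    exact ⟨h (k-1), by linear_combination hck.symm⟩
  -- degree bounds : natDegree P ≤ 1 and natDegree R ≤ 1
  have hnd0 : d.natDegree + P.natDegree ≤ k - 1 := by
    have := hnd 0 (by omega)
    rw [← hdP, Polynomial.natDegree_mul hd0 hP0] at this
    exact this
  have hndd : (k-2) * P.natDegree ≤ d.natDegree := by
    have := Polynomial.natDegree_le_of_dvd hdvd hd0
    rwa [Polynomial.natDegree_pow] at this
  have hdP1 : P.natDegree ≤ 1 := by
    have hmulle : (k-1) * P.natDegree ≤ (k-1) * 1 := by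
      have : (k-2) * P.natDegree + P.natDegree ≤ k - 1 := le_trans (by omega) hnd0
      calc (k-1) * P.natDegree = (k-2) * P.natDegree + P.natDegree := by
            have hk2' : k - 1 = (k-2) + 1 := by omega
            rw [hk2']; ring
        _ ≤ k - 1 := this
        _ = (k-1) * 1 := by omega
    exact Nat.le_of_mul_le_mul_left (by rwa [mul_comm ((k:ℕ)-1), mul_comm ((k:ℕ)-1)] at hmulle) (by omega)
  have hdR1 : R.natDegree ≤ 1 := by
    have e1 : (h (k-1)).natDegree + (k-2) * P.natDegree
        = d.natDegree + (k-1) * R.natDegree := by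
      have := congrArg Polynomial.natDegree hck
      rwa [Polynomial.natDegree_mul (hne (k-1) (by omega)) (pow_ne_zero _ hP0),
        Polynomial.natDegree_mul hd0 (pow_ne_zero _ hR0),
        Polynomial.natDegree_pow, Polynomial.natDegree_pow] at this
    have e2 : (h (k-1)).natDegree ≤ k - 1 := hnd (k-1) (by omega)
    have hmulle : (k-1) * R.natDegree ≤ (k-1) * 1 := by omega
    exact Nat.le_of_mul_le_mul_left (by rwa [mul_comm ((k:ℕ)-1), mul_comm ((k:ℕ)-1)] at hmulle) (by omega)
  -- pointwise : β i = R(α i) / P(α i)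
  have hdα : ∀ i, d.eval (α i) * P.eval (α i) ≠ 0 := by
    intro i
    rw [← Polynomial.eval_mul, hdP, ← heval 0 (by omega) i]
    simp only [pow_zero, mul_one]
    exact mul_ne_zero (hu i) (hW i)
  have hβR : ∀ i, R.eval (α i) = β i * P.eval (α i) := by
    intro i
    have e0 : d.eval (α i) * P.eval (α i) = u i * W i := by
      rw [← Polynomial.eval_mul, hdP, ← heval 0 (by omega) i]; ring
    have e1 : d.eval (α i) * R.eval (α i) = u i * β i * W i := by
      rw [← Polynomial.eval_mul, hdR, ← heval 1 (by omega) i]; ring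
    have hdi : d.eval (α i) ≠ 0 := fun h => hdα i (by rw [h, zero_mul])
    apply mul_left_cancel₀ hdi
    rw [e1]
    calc u i * β i * W i = β i * (u i * W i) := by ring
      _ = β i * (d.eval (α i) * P.eval (α i)) := by rw [e0]
      _ = d.eval (α i) * (β i * P.eval (α i)) := by ring
  -- coefficients
  have hPev : ∀ x, P.eval x = P.coeff 1 * x + P.coeff 0 := by
    intro x
    conv_lhs => rw [Polynomial.eq_X_add_C_of_degree_le_one (p := P)
      (le_trans Polynomial.degree_le_natDegree (by exact_mod_cast hdP1))]
    simp
  have hRev : ∀ x, R.eval x = R.coeff 1 * x + R.coeff 0 := by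
    intro x
    conv_lhs => rw [Polynomial.eq_X_add_C_of_degree_le_one (p := R)
      (le_trans Polynomial.degree_le_natDegree (by exact_mod_cast hdR1))]
    simp
  set cp := P.coeff 1 with hcp
  set c0p := P.coeff 0 with hc0p
  set cr := R.coeff 1 with hcr
  set c0r := R.coeff 0 with hc0r
  have key : ∀ i, α i ^ q * (cp * α i + c0p) = cr * α i + c0r := by
    intro i
    rw [← hPev, ← hRev, hβR i]
  have keyne : ∀ i, cp * α i + c0p ≠ 0 := by
    intro i h
    exact hdα i (by rw [hPev, h, mul_zero])
  by_cases hcp0 : cp = 0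
  · -- case (b), affine
    right
    have hc0p0 : c0p ≠ 0 := by
      have := keyne ⟨0, by omega⟩
      rwa [hcp0, zero_mul, zero_add] at this
    refine ⟨cr / c0p, c0r / c0p, fun i => ?_⟩
    have := key i
    rw [hcp0, zero_mul, zero_add] at this
    rw [div_mul_eq_mul_div, ← add_div, eq_div_iff hc0p0]
    linear_combination this
  -- now cp ≠ 0
  have E' : ∀ i, α i * (cp ^ q * α i ^ q + c0p ^ q) = cr ^ q * α i ^ q + c0r ^ q := by
    intro i
    have h1 := congrArg (· ^ q) (key i)
    rw [mul_pow, hfrobadd (cp * α i) c0p, mul_pow cp (α i), hqq (α i),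
      hfrobadd (cr * α i) c0r, mul_pow cr (α i)] at h1
    exact h1
  by_cases hA : cp * cr ^ q + cp ^ q * c0p = 0
  · -- case (a)
    left
    have hcpq : cp ^ q ≠ 0 := pow_ne_zero _ hcp0
    have hi01 : α ⟨0, by omega⟩ ≠ α ⟨1, by omega⟩ := by
      intro h
      have h2 := hα h
      simp [Fin.ext_iff] at h2
    have lin : ∀ i, (cp ^ q * cr + cp * c0p ^ q) * α i + (cp ^ q * c0r - cp * c0r ^ q) = 0 := by
      intro i
      have e1 := key i
      have e2 := E' i
      linear_combination -(cp ^ q * e1) + cp * e2 + α i ^ q * hA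
    have hB : cp ^ q * cr + cp * c0p ^ q = 0 := by
      have l0 := lin ⟨0, by omega⟩
      have l1 := lin ⟨1, by omega⟩
      have hmul0 : (cp ^ q * cr + cp * c0p ^ q) * (α ⟨0, by omega⟩ - α ⟨1, by omega⟩) = 0 := by
        linear_combination l0 - l1
      rcases mul_eq_zero.1 hmul0 with h | h
      · exact h
      · exact absurd (sub_eq_zero.1 h) hi01
    have hC : cp ^ q * c0r = cp * c0r ^ q := by
      have l0 := lin ⟨0, by omega⟩
      linear_combination l0 - α ⟨0, by omega⟩ * hB
    -- the witnesses
    have hc0pe : c0p = cp * (-(cr ^ q) / cp ^ q) := by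
      field_simp
      linear_combination hA
    have heeq : (-(cr ^ q) / cp ^ q) ^ q = -(cr / cp) := by
      rw [div_pow, hnegq, hqq, hqq, neg_div]
    have hmain3 : ∀ i, (α i + -(cr ^ q) / cp ^ q) ^ (q+1)
        = c0r / cp + (-(cr ^ q) / cp ^ q) ^ (q+1) := by
      intro i
      have E3 : α i ^ q * (cp ^ q * cp * α i - cp * cr ^ q) = cp ^ q * (cr * α i + c0r) := by
        linear_combination cp ^ q * (key i) - α i ^ q * hA
      have d1 : cp * (α i ^ q + -(cr / cp)) = cp * α i ^ q - cr := by field_simp; ring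
      have d2 : cp ^ q * (α i + -(cr ^ q) / cp ^ q) = cp ^ q * α i - cr ^ q := by field_simp; ring
      have d3 : (cp * cp ^ q) * (c0r / cp + -(cr / cp) * (-(cr ^ q) / cp ^ q))
          = cp ^ q * c0r + cr * cr ^ q := by field_simp
      have G' : (cp * (α i ^ q + -(cr / cp))) * (cp ^ q * (α i + -(cr ^ q) / cp ^ q))
          = (cp * cp ^ q) * (c0r / cp + -(cr / cp) * (-(cr ^ q) / cp ^ q)) := by
        rw [d1, d2, d3]
        linear_combination E3
      rw [pow_succ, hfrobadd, heeq, pow_succ, heeq]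
      apply mul_left_cancel₀ (mul_ne_zero hcp0 hcpq)
      calc (cp * cp ^ q) * ((α i ^ q + -(cr / cp)) * (α i + -(cr ^ q) / cp ^ q))
          = (cp * (α i ^ q + -(cr / cp))) * (cp ^ q * (α i + -(cr ^ q) / cp ^ q)) := by ring
        _ = (cp * cp ^ q) * (c0r / cp + -(cr / cp) * (-(cr ^ q) / cp ^ q)) := G'
    refine ⟨-(cr ^ q) / cp ^ q, c0r / cp + (-(cr ^ q) / cp ^ q) ^ (q+1), ?_, ?_, hmain3⟩
    · -- b' ≠ 0
      intro hb0
      have h3 := hmain3 ⟨0, by omega⟩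
      have hz : α ⟨0, by omega⟩ + -(cr ^ q) / cp ^ q ≠ 0 := by
        intro h0
        apply keyne ⟨0, by omega⟩
        rw [hc0pe, ← mul_add, h0, mul_zero]
      exact pow_ne_zero (q+1) hz (h3.trans hb0)
    · -- b' is fixed by Frobenius
      rw [hfrobadd, div_pow, pow_succ, mul_pow, hqq]
      have hfix : c0r ^ q / cp ^ q = c0r / cp := by
        rw [div_eq_div_iff hcpq hcp0]
        linear_combination -hC
      rw [hfix]
      ring
  · -- case (b) again
    right
    refine ⟨(cp * cr ^ q + cp ^ q * c0p)⁻¹ * (cp ^ q * cr + cp * c0p ^ q),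
      (cp * cr ^ q + cp ^ q * c0p)⁻¹ * (cp ^ q * c0r - cp * c0r ^ q), fun i => ?_⟩
    have e1 := key i
    have e2 := E' i
    have hmain : (cp * cr ^ q + cp ^ q * c0p) * α i ^ q
        = (cp ^ q * cr + cp * c0p ^ q) * α i + (cp ^ q * c0r - cp * c0r ^ q) := by
      linear_combination cp ^ q * e1 - cp * e2
    apply mul_left_cancel₀ hA
    rw [mul_add, ← mul_assoc, ← mul_assoc, mul_inv_cancel₀ hA, one_mul, ← mul_assoc,
      mul_inv_cancel₀ hA, one_mul]
    exact hmain
end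

section
/- Let q be a prime power, let F_{q^2} be the finite field with q^2 elements, let n = 2k with n ≤ q, let α = (α_1, ..., α_n) be a vector of n distinct elements of F_{q^2}, and let v = (v_1, ..., v_n) ∈ (F_{q^2}^*)^n. If the generalized Reed–Solomon code GRS_{n,k}(α, v) is Hermitian self-dual, then there exist λ_0, λ_1 ∈ F_{q^2}, not both zero, and c_0, c_1 ∈ F_{q^2} such that λ_0·α_i^q + λ_1·α_i^{q+1} = c_0 + c_1·α_i for every i = 1, ..., n. -/
open Finset

open Polynomial Lagrange in
/-- The Lagrange basis polynomial is the nodal weight times the nodal polynomial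
of the remaining points. -/
lemma basis_eq_C_nodalWeight_mul_nodal {F : Type*} [Field F] {n : ℕ}
    (α : Fin n → F) (i : Fin n) :
    Lagrange.basis univ α i =
      C (nodalWeight univ α i) * nodal (univ.erase i) α := by
  rw [Lagrange.basis, nodalWeight, nodal_eq, map_prod, ← prod_mul_distrib]
  exact Finset.prod_congr rfl fun j _ => rfl

open Polynomial Lagrange in
/-- Key classical identity: for a polynomial `H` of degree `< n`, the sum of the
nodal-weighted values of `H` over `n` distinct points equals the coefficient of
`X^(n-1)` in `H`. -/
lemma sum_nodalWeight_mul_eval {F : Type*} [Field F] {n : ℕ} (α : Fin n → F)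
    (hα : Function.Injective α) (H : Polynomial F) (hd : H.degree < (n : WithBot ℕ)) :
    ∑ i, nodalWeight univ α i * Polynomial.eval (α i) H = H.coeff (n - 1) := by
  have hinj : Set.InjOn α ↑(univ : Finset (Fin n)) := fun x _ y _ h => hα h
  have hcard : (#(univ : Finset (Fin n)) : WithBot ℕ) = (n : WithBot ℕ) := by
    simp
  have hH := Lagrange.eq_interpolate hinj (by rwa [hcard])
  conv_rhs => rw [hH]
  rw [interpolate_apply, finset_sum_coeff]
  apply Finset.sum_congr rfl
  intro i _
  rw [coeff_C_mul, basis_eq_C_nodalWeight_mul_nodal α i, coeff_C_mul]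
  have hdeg : (nodal (univ.erase i) α).natDegree = n - 1 := by
    rw [natDegree_nodal, card_erase_of_mem (mem_univ i), card_univ, Fintype.card_fin]
  have hmonic : (nodal (univ.erase i) α).Monic := nodal_monic
  have : (nodal (univ.erase i) α).coeff (n - 1) = 1 := by
    rw [← hdeg]; exact hmonic.coeff_natDegree
  rw [this]
  ring

/-- If `n = 2k ≤ q` and `GRS_{n,k}(α, v)` over `F_{q²}` is
Hermitian self-dual, then there exist `λ₀, λ₁ ∈ F_{q²}`, not both zero, and
`c₀, c₁ ∈ F_{q²}` with `λ₀·αᵢ^q + λ₁·αᵢ^{q+1} = c₀ + c1·αᵢ` for every `i`. -/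
theorem stmt9 {F : Type*} [Field F] [Fintype F] (q k : ℕ)
    (hq : IsPrimePow q) (hcard : Fintype.card F = q ^ 2)
    (hn : 2 * k ≤ q)
    (α : Fin (2 * k) → F) (hα : Function.Injective α)
    (v : Fin (2 * k) → F) (hv : ∀ l, v l ≠ 0)
    (hsd : IsHermitianSelfDual q (2 * k) (GRScode (2 * k) k α v)) :
    ∃ l0 l1 c0 c1 : F, (l0 ≠ 0 ∨ l1 ≠ 0) ∧
      ∀ i, l0 * α i ^ q + l1 * α i ^ (q + 1) = c0 + c1 * α i := by
  classical
  rcases Nat.lt_or_ge k 2 with hk | hk2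
  · interval_cases k
    · exact ⟨1, 0, 0, 0, Or.inl one_ne_zero, fun i => i.elim0⟩
    · -- k = 1 : purely linear algebra on two points
      set i0 : Fin (2 * 1) := ⟨0, by norm_num⟩
      set i1 : Fin (2 * 1) := ⟨1, by norm_num⟩
      have hne : α i0 - α i1 ≠ 0 := by
        intro h
        have h2 : i0 = i1 := hα (sub_eq_zero.mp h)
        have h3 := congrArg Fin.val h2
        simp [i0, i1] at h3
      refine ⟨1, 0, α i0 ^ q - (α i0 ^ q - α i1 ^ q) / (α i0 - α i1) * α i0,
        (α i0 ^ q - α i1 ^ q) / (α i0 - α i1), Or.inl one_ne_zero, ?_⟩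
      intro i
      have hi : i = i0 ∨ i = i1 := by
        rcases i with ⟨iv, hiv⟩
        have : iv < 2 := by omega
        interval_cases iv
        · exact Or.inl rfl
        · exact Or.inr rfl
      rcases hi with rfl | rfl
      · field_simp
        ring
      · field_simp
        ring
  · -- main case : k ≥ 2
    replace hsd : GRScode (2 * k) k α v
        = {x | ∀ y ∈ GRScode (2 * k) k α v, ∑ i, x i * y i ^ q = 0} := hsd
    have hinj : Set.InjOn α ↑(univ : Finset (Fin (2 * k))) := fun x _ y _ h => hα h
    set w : Fin (2 * k) → F := fun i => v i ^ (q + 1) with hw_def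
    have hw : ∀ i, w i ≠ 0 := fun i => pow_ne_zero _ (hv i)
    set u : Fin (2 * k) → F := fun i => Lagrange.nodalWeight univ α i with hu_def
    have hu : ∀ i, u i ≠ 0 := fun i => Lagrange.nodalWeight_ne_zero hinj (mem_univ i)
    -- membership of the monomial words:
    have hmem : ∀ a : ℕ, a < k → (fun i => v i * α i ^ a) ∈ GRScode (2 * k) k α v := by
      intro a ha
      refine ⟨Polynomial.X ^ a, ?_, fun i => by simp⟩
      rw [Polynomial.degree_X_pow]
      exact_mod_cast ha
    -- the orthogonality relations
    have horth : ∀ a b : ℕ, a < k → b < k →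
        ∑ i, w i * (α i ^ a * (α i ^ q) ^ b) = 0 := by
      intro a b ha hb
      have h := ((Set.ext_iff.mp hsd _).mp (hmem a ha)) _ (hmem b hb)
      calc ∑ i, w i * (α i ^ a * (α i ^ q) ^ b)
          = ∑ i, (v i * α i ^ a) * (v i * α i ^ b) ^ q := by
            refine Finset.sum_congr rfl fun i _ => ?_
            simp only [hw_def]
            ring
        _ = 0 := h
    -- the interpolation polynomials
    set f : ℕ → Polynomial F :=
      fun b => Lagrange.interpolate univ α (fun i => w i * (α i ^ q) ^ b * (u i)⁻¹)
      with hf_def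
    have heval : ∀ b i, u i * (f b).eval (α i) = w i * (α i ^ q) ^ b := by
      intro b i
      rw [hf_def]
      rw [Lagrange.eval_interpolate_at_node _ hinj (mem_univ i)]
      field_simp
      rw [mul_assoc]
      exact mul_div_cancel_left₀ _ (hu i)
    have hcardu : #(univ : Finset (Fin (2 * k))) = 2 * k := by
      rw [card_univ, Fintype.card_fin]
    -- degree bound on the interpolation polynomials
    have hdeglt : ∀ b, b < k → (f b).degree < (k : WithBot ℕ) := by
      intro b hb
      by_contra hge
      push_neg at hge
      have hf0 : f b ≠ 0 := by
        intro h
        rw [h, Polynomial.degree_zero] at hge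
        exact absurd hge (by simp)
      have hdn : (f b).degree < ((2 * k : ℕ) : WithBot ℕ) := by
        have h := Lagrange.degree_interpolate_lt
          (fun i => w i * (α i ^ q) ^ b * (u i)⁻¹) hinj
        rw [hcardu] at h
        exact h
      set m := (f b).natDegree with hm_def
      have hkm : k ≤ m := by
        have := Polynomial.degree_eq_natDegree hf0
        rw [this] at hge
        exact_mod_cast hge
      have hmn : m < 2 * k := by
        rwa [← Polynomial.natDegree_lt_iff_degree_lt hf0] at hdn
      set a := 2 * k - 1 - m with ha_def
      have ha : a < k := by omega
      have ham : m + a = 2 * k - 1 := by omega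
      have hdegH : (f b * Polynomial.X ^ a).degree < ((2 * k : ℕ) : WithBot ℕ) := by
        rw [Polynomial.degree_mul, Polynomial.degree_X_pow,
          Polynomial.degree_eq_natDegree hf0]
        have : ((m : WithBot ℕ) + (a : WithBot ℕ)) = ((m + a : ℕ) : WithBot ℕ) := by
          push_cast; rfl
        rw [this, ham]
        exact_mod_cast (by omega : 2 * k - 1 < 2 * k)
      have hkey := sum_nodalWeight_mul_eval α hα (f b * Polynomial.X ^ a) hdegH
      have hLHS : ∑ i, Lagrange.nodalWeight univ α i *
          Polynomial.eval (α i) (f b * Polynomial.X ^ a) = 0 := by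
        calc ∑ i, Lagrange.nodalWeight univ α i *
            Polynomial.eval (α i) (f b * Polynomial.X ^ a)
            = ∑ i, w i * (α i ^ a * (α i ^ q) ^ b) := by
              refine Finset.sum_congr rfl fun i _ => ?_
              rw [Polynomial.eval_mul, Polynomial.eval_pow, Polynomial.eval_X]
              have h1 := heval b i
              calc Lagrange.nodalWeight univ α i *
                  ((f b).eval (α i) * α i ^ a)
                  = (u i * (f b).eval (α i)) * α i ^ a := by rw [hu_def]; ring
                _ = (w i * (α i ^ q) ^ b) * α i ^ a := by rw [h1]
                _ = w i * (α i ^ a * (α i ^ q) ^ b) := by ring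
          _ = 0 := horth a b ha hb
      rw [hkey] at hLHS
      have : (f b * Polynomial.X ^ a).coeff (2 * k - 1) = (f b).coeff m := by
        rw [← ham, Polynomial.coeff_mul_X_pow]
      rw [this] at hLHS
      exact Polynomial.leadingCoeff_ne_zero.mpr hf0 hLHS
    have hnatdeg : ∀ b, b < k → (f b).natDegree ≤ k - 1 := by
      intro b hb
      by_cases h : f b = 0
      · simp [h]
      · have := (Polynomial.natDegree_lt_iff_degree_lt h).mpr (hdeglt b hb)
        omega
    -- nonvanishing of some of the `f b`
    have i₀ : Fin (2 * k) := ⟨0, by omega⟩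
    have hexne : ∃ j, α j ≠ 0 := by
      by_contra h
      push_neg at h
      have h01 : (⟨0, by omega⟩ : Fin (2 * k)) = ⟨1, by omega⟩ :=
        hα (by rw [h, h])
      simp [Fin.mk.injEq] at h01
    obtain ⟨j₀, hj₀⟩ := hexne
    have hf0ne : f 0 ≠ 0 := by
      intro h
      have h0 := heval 0 i₀
      rw [h, Polynomial.eval_zero, mul_zero, pow_zero, mul_one] at h0
      exact hw i₀ h0.symm
    have hf1ne : f 1 ≠ 0 := by
      intro h
      have h0 := heval 1 j₀
      rw [h, Polynomial.eval_zero, mul_zero, pow_one] at h0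
      exact mul_ne_zero (hw j₀) (pow_ne_zero _ hj₀) h0.symm
    have hfkne : f (k - 1) ≠ 0 := by
      intro h
      have h0 := heval (k - 1) j₀
      rw [h, Polynomial.eval_zero, mul_zero] at h0
      exact mul_ne_zero (hw j₀) (pow_ne_zero _ (pow_ne_zero _ hj₀)) h0.symm
    -- pointwise products agree, hence polynomial relation
    have hrel : ∀ b, b + 1 < k → f (b + 1) * f 0 = f b * f 1 := by
      intro b hb
      have hz : f (b + 1) * f 0 - f b * f 1 = 0 := by
        apply Polynomial.eq_zero_of_natDegree_lt_card_of_eval_eq_zero _ hα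
        · intro i
          have h1 := heval (b + 1) i
          have h2 := heval 0 i
          have h3 := heval b i
          have h4 := heval 1 i
          rw [pow_zero, mul_one] at h2
          rw [pow_one] at h4
          have hkey : (f (b + 1)).eval (α i) * (f 0).eval (α i)
              = (f b).eval (α i) * (f 1).eval (α i) := by
            apply mul_left_cancel₀ (mul_ne_zero (hu i) (hu i))
            calc u i * u i * ((f (b + 1)).eval (α i) * (f 0).eval (α i))
                = (u i * (f (b + 1)).eval (α i)) * (u i * (f 0).eval (α i)) := by ring
              _ = (w i * (α i ^ q) ^ (b + 1)) * (w i) := by rw [h1, h2]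
              _ = (w i * (α i ^ q) ^ b) * (w i * α i ^ q) := by ring
              _ = (u i * (f b).eval (α i)) * (u i * (f 1).eval (α i)) := by
                  rw [h3, h4]
              _ = u i * u i * ((f b).eval (α i) * (f 1).eval (α i)) := by ring
          simp [Polynomial.eval_sub, Polynomial.eval_mul, hkey]
        · rw [Fintype.card_fin]
          have d1 := hnatdeg (b + 1) hb
          have d2 := hnatdeg 0 (by omega)
          have d3 := hnatdeg b (by omega)
          have d4 := hnatdeg 1 (by omega)
          calc (f (b + 1) * f 0 - f b * f 1).natDegree
              ≤ max (f (b + 1) * f 0).natDegree (f b * f 1).natDegree :=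
                Polynomial.natDegree_sub_le _ _
            _ ≤ max ((f (b + 1)).natDegree + (f 0).natDegree)
                  ((f b).natDegree + (f 1).natDegree) :=
                max_le_max (Polynomial.natDegree_mul_le) (Polynomial.natDegree_mul_le)
            _ < 2 * k := by omega
      exact sub_eq_zero.mp hz
    -- gcd decomposition
    set g : Polynomial F := EuclideanDomain.gcd (f 0) (f 1) with hg_def
    have hgne : g ≠ 0 := by
      intro h
      exact hf0ne (EuclideanDomain.gcd_eq_zero_iff.mp h).1
    set p : Polynomial F := f 0 / g with hp_def
    set r : Polynomial F := f 1 / g with hr_def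
    have hgp : g * p = f 0 :=
      EuclideanDomain.mul_div_cancel' hgne (EuclideanDomain.gcd_dvd_left _ _)
    have hgr : g * r = f 1 :=
      EuclideanDomain.mul_div_cancel' hgne (EuclideanDomain.gcd_dvd_right _ _)
    have hpne : p ≠ 0 := by
      intro h; rw [h, mul_zero] at hgp; exact hf0ne hgp.symm
    have hrne : r ≠ 0 := by
      intro h; rw [h, mul_zero] at hgr; exact hf1ne hgr.symm
    have hcop : IsCoprime p r := by
      have hbez := EuclideanDomain.gcd_eq_gcd_ab (f 0) (f 1)
      refine ⟨EuclideanDomain.gcdA (f 0) (f 1), EuclideanDomain.gcdB (f 0) (f 1), ?_⟩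
      apply mul_left_cancel₀ hgne
      rw [mul_one]
      calc g * (EuclideanDomain.gcdA (f 0) (f 1) * p
            + EuclideanDomain.gcdB (f 0) (f 1) * r)
          = (g * p) * EuclideanDomain.gcdA (f 0) (f 1)
            + (g * r) * EuclideanDomain.gcdB (f 0) (f 1) := by ring
        _ = f 0 * EuclideanDomain.gcdA (f 0) (f 1)
            + f 1 * EuclideanDomain.gcdB (f 0) (f 1) := by rw [hgp, hgr]
        _ = g := hbez.symm
    -- the telescoping relation
    have hstep : ∀ b, b + 1 < k → f (b + 1) * p = f b * r := by
      intro b hb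
      apply mul_left_cancel₀ hgne
      calc g * (f (b + 1) * p) = f (b + 1) * (g * p) := by ring
        _ = f (b + 1) * f 0 := by rw [hgp]
        _ = f b * f 1 := hrel b hb
        _ = f b * (g * r) := by rw [hgr]
        _ = g * (f b * r) := by ring
    have htel : ∀ b, b + 1 < k → f (b + 1) * p ^ b = g * r ^ (b + 1) := by
      intro b
      induction b with
      | zero => intro _; simpa using hgr.symm
      | succ b ih =>
        intro hb
        have h1 : b + 1 < k := by omega
        calc f (b + 1 + 1) * p ^ (b + 1)
            = (f (b + 1 + 1) * p) * p ^ b := by ring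
          _ = (f (b + 1) * r) * p ^ b := by rw [hstep (b + 1) hb]
          _ = (f (b + 1) * p ^ b) * r := by ring
          _ = (g * r ^ (b + 1)) * r := by rw [ih h1]
          _ = g * r ^ (b + 1 + 1) := by ring
    have hkk : k - 2 + 1 = k - 1 := by omega
    have hkey : f (k - 1) * p ^ (k - 2) = g * r ^ (k - 1) := by
      have := htel (k - 2) (by omega)
      rwa [hkk] at this
    -- divisibility and degrees
    have hpg : p ^ (k - 2) ∣ g := by
      refine (hcop.pow (m := k - 2) (n := k - 1)).dvd_of_dvd_mul_right ?_
      exact ⟨f (k - 1), by rw [← hkey]; ring⟩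
    have hdvddeg : (k - 2) * p.natDegree ≤ g.natDegree := by
      have := Polynomial.natDegree_le_of_dvd hpg hgne
      rwa [Polynomial.natDegree_pow] at this
    have hdf0 : g.natDegree + p.natDegree ≤ k - 1 := by
      have h1 : (f 0).natDegree = g.natDegree + p.natDegree := by
        rw [← hgp, Polynomial.natDegree_mul hgne hpne]
      have h2 := hnatdeg 0 (by omega)
      omega
    have hp1 : p.natDegree ≤ 1 := by
      have h1 : p.natDegree * (k - 1) ≤ 1 * (k - 1) := by
        have e : k - 1 = (k - 2) + 1 := by omega
        rw [e, one_mul, mul_add, mul_one, mul_comm]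
        omega
      exact Nat.le_of_mul_le_mul_right h1 (by omega)
    have hdegeq : (f (k - 1)).natDegree + (k - 2) * p.natDegree
        = g.natDegree + (k - 1) * r.natDegree := by
      have h1 : (f (k - 1) * p ^ (k - 2)).natDegree
          = (f (k - 1)).natDegree + (k - 2) * p.natDegree := by
        rw [Polynomial.natDegree_mul hfkne (pow_ne_zero _ hpne),
          Polynomial.natDegree_pow]
      have h2 : (g * r ^ (k - 1)).natDegree
          = g.natDegree + (k - 1) * r.natDegree := by
        rw [Polynomial.natDegree_mul hgne (pow_ne_zero _ hrne),
          Polynomial.natDegree_pow]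
      rw [← h1, ← h2, hkey]
    have hr1 : r.natDegree ≤ 1 := by
      have hfd := hnatdeg (k - 1) (by omega)
      have h4 : (k - 1) * r.natDegree ≤ (f (k - 1)).natDegree := by omega
      have h5 : r.natDegree * (k - 1) ≤ 1 * (k - 1) := by
        rw [one_mul, mul_comm]; omega
      exact Nat.le_of_mul_le_mul_right h5 (by omega)
    -- conclude
    refine ⟨p.coeff 0, p.coeff 1, r.coeff 0, r.coeff 1, ?_, ?_⟩
    · by_contra h
      push_neg at h
      apply hpne
      have := Polynomial.eq_X_add_C_of_natDegree_le_one hp1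
      rw [h.1, h.2] at this
      simpa using this
    · intro i
      have h2 := heval 0 i
      have h4 := heval 1 i
      rw [pow_zero, mul_one, ← hgp, Polynomial.eval_mul] at h2
      rw [pow_one, ← hgr, Polynomial.eval_mul] at h4
      have hgev : g.eval (α i) ≠ 0 := by
        intro h
        rw [h, zero_mul, mul_zero] at h2
        exact hw i h2.symm
      have hpt : p.eval (α i) * α i ^ q = r.eval (α i) := by
        apply mul_left_cancel₀ (mul_ne_zero (hu i) hgev)
        calc u i * g.eval (α i) * (p.eval (α i) * α i ^ q)
            = (u i * (g.eval (α i) * p.eval (α i))) * α i ^ q := by ring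
          _ = w i * α i ^ q := by rw [h2]
          _ = u i * (g.eval (α i) * r.eval (α i)) := h4.symm
          _ = u i * g.eval (α i) * r.eval (α i) := by ring
      have hp_eval : p.eval (α i) = p.coeff 0 + p.coeff 1 * α i := by
        conv_lhs => rw [Polynomial.eq_X_add_C_of_natDegree_le_one hp1]
        simp
        ring
      have hr_eval : r.eval (α i) = r.coeff 0 + r.coeff 1 * α i := by
        conv_lhs => rw [Polynomial.eq_X_add_C_of_natDegree_le_one hr1]
        simp
        ring
      rw [hp_eval, hr_eval] at hpt
      linear_combination hpt
end

section
/- Let q be a prime power, let F_{q^2} be the finite field with q^2 elements, and let a, b ∈ F_{q^2}. Define S = {α ∈ F_{q^2} : α^q = a·α + b}. Then S has more than one element if and only if a^{q+1} = 1 and b^q + a^q·b = 0. -/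
open Polynomial

/-- Root-counting bound: the set `{x | x^q = c x}` has at most `q` elements. -/
lemma stmt10_aux_roots {F : Type*} [Field F] {q : ℕ} (hq2 : 2 ≤ q) (c : F) :
    ({x : F | x ^ q = c * x}).ncard ≤ q := by
  classical
  set P : F[X] := X ^ q - C c * X with hP
  have hPm : P.Monic := by
    apply Polynomial.monic_X_pow_sub
    calc (C c * X).degree ≤ (C c).degree + X.degree := Polynomial.degree_mul_le _ _
      _ ≤ 0 + 1 := add_le_add Polynomial.degree_C_le (le_of_eq Polynomial.degree_X)
      _ = ((1 : ℕ) : WithBot ℕ) := by norm_num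
      _ < (q : WithBot ℕ) := by exact_mod_cast (by omega : (1 : ℕ) < q)
  have hP0 : P ≠ 0 := hPm.ne_zero
  have hset : {x : F | x ^ q = c * x} = ↑P.roots.toFinset := by
    ext x
    simp [hP, Polynomial.mem_roots', hP0, Polynomial.IsRoot, sub_eq_zero]
    exact fun _ h => hP0 (by rw [hP, h, sub_self])
  rw [hset, Set.ncard_coe_finset]
  calc P.roots.toFinset.card ≤ Multiset.card P.roots := P.roots.toFinset_card_le
    _ ≤ P.natDegree := Polynomial.card_roots' P
    _ ≤ q := by
        apply (Polynomial.natDegree_sub_le _ _).trans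
        simp only [Polynomial.natDegree_X_pow, max_le_iff, le_refl, true_and]
        exact (Polynomial.natDegree_C_mul_le c X).trans (by rw [Polynomial.natDegree_X]; omega)

/-- Existence of an eigenvector for Frobenius: if `a^(q+1) = 1` then there is `γ ≠ 0`
with `γ^q = a γ`. -/
lemma stmt10_aux_gamma {F : Type*} [Field F] [Fintype F] {q : ℕ} (hq2 : 2 ≤ q)
    (hcard : Fintype.card F = q ^ 2) {a : F} (hA : a ^ (q + 1) = 1) :
    ∃ γ : F, γ ≠ 0 ∧ γ ^ q = a * γ := by
  classical
  have ha0 : a ≠ 0 := by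
    rintro rfl
    rw [zero_pow (Nat.succ_ne_zero q)] at hA
    exact zero_ne_one hA
  obtain ⟨g, hg⟩ := IsCyclic.exists_monoid_generator (α := Fˣ)
  have hgz : ∀ x : Fˣ, x ∈ Subgroup.zpowers g := by
    intro x
    obtain ⟨m, hm⟩ := hg x
    exact ⟨(m : ℤ), by simpa using hm⟩
  have horder : orderOf g = q ^ 2 - 1 := by
    rw [orderOf_eq_card_of_forall_mem_zpowers hgz, Nat.card_units,
      Nat.card_eq_fintype_card, hcard]
  set au : Fˣ := Units.mk0 a ha0 with hau
  obtain ⟨m, hm'⟩ := hg au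
  have hm : g ^ m = au := hm'
  have hau1 : au ^ (q + 1) = 1 := by
    ext
    push_cast [hau]
    exact hA
  have hdvd : (q ^ 2 - 1) ∣ m * (q + 1) := by
    rw [← horder]
    apply orderOf_dvd_of_pow_eq_one
    rw [pow_mul, hm, hau1]
  have hfac : q ^ 2 - 1 = (q - 1) * (q + 1) := by
    rw [tsub_mul, one_mul]
    have h1 : q * (q + 1) = q ^ 2 + q := by ring
    rw [h1]
    generalize q ^ 2 = Q
    omega
  have hdvd' : (q - 1) ∣ m := by
    rw [hfac] at hdvd
    exact (Nat.mul_dvd_mul_iff_right (Nat.succ_pos q)).mp hdvd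
  obtain ⟨s, hs⟩ := hdvd'
  refine ⟨((g ^ s : Fˣ) : F), Units.ne_zero _, ?_⟩
  have hpow : ((g ^ s : Fˣ) : F) ^ (q - 1) = a := by
    have : (g ^ s) ^ (q - 1) = au := by
      rw [← pow_mul, mul_comm s (q - 1), ← hs, hm]
    calc ((g ^ s : Fˣ) : F) ^ (q - 1) = (((g ^ s) ^ (q - 1) : Fˣ) : F) := by push_cast; ring
      _ = a := by rw [this]; rfl
  have hq1 : q - 1 + 1 = q := Nat.succ_pred_eq_of_pos (Nat.lt_of_lt_of_le Nat.zero_lt_two hq2)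
  calc ((g ^ s : Fˣ) : F) ^ q = ((g ^ s : Fˣ) : F) ^ (q - 1) * ((g ^ s : Fˣ) : F) := by
        rw [← pow_succ, hq1]
    _ = a * ((g ^ s : Fˣ) : F) := by rw [hpow]

/-- For `a, b ∈ F_{q²}`, the set
`S = {α ∈ F_{q²} : α^q = a·α + b}` has more than one element iff
`a^{q+1} = 1` and `b^q + a^q·b = 0`. -/
theorem stmt10 {F : Type*} [Field F] [Fintype F] (q : ℕ)
    (hq : IsPrimePow q) (hcard : Fintype.card F = q ^ 2)
    (a b : F) :
    ({α : F | α ^ q = a * α + b} : Set F).Nontrivial ↔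
      (a ^ (q + 1) = 1 ∧ b ^ q + a ^ q * b = 0) := by
  obtain ⟨p, k, hp, hk, hpk⟩ := hq
  rw [← Nat.prime_iff] at hp
  haveI : Fact p.Prime := ⟨hp⟩
  have hq2 : 2 ≤ q := by
    rw [← hpk]
    calc 2 ≤ p := hp.two_le
      _ = p ^ 1 := (pow_one p).symm
      _ ≤ p ^ k := Nat.pow_le_pow_right hp.pos hk
  have hq0 : q ≠ 0 := by omega
  -- char F = p
  obtain ⟨n, hr, hn⟩ := FiniteField.card F (ringChar F)
  have hpr : p = ringChar F := by
    have h1 : p ∣ Fintype.card F := by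
      rw [hcard, ← hpk, ← pow_mul]
      exact dvd_pow_self p (by positivity)
    rw [hn] at h1
    exact (Nat.prime_dvd_prime_iff_eq hp hr).mp (hp.dvd_of_dvd_pow h1)
  haveI hcharP : CharP F p := by rw [hpr]; exact ringChar.charP F
  -- Frobenius is additive
  have hadd : ∀ x y : F, (x + y) ^ q = x ^ q + y ^ q := by
    intro x y; rw [← hpk]; exact add_pow_char_pow x y p k
  have hsub : ∀ x y : F, (x - y) ^ q = x ^ q - y ^ q := by
    intro x y; rw [← hpk]; exact sub_pow_char_pow x y k
  have hcardpow : ∀ x : F, (x ^ q) ^ q = x := by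
    intro x
    rw [← pow_mul, ← pow_two]
    rw [← hcard]
    exact FiniteField.pow_card x
  constructor
  · rintro ⟨α, hα, β, hβ, hne⟩
    simp only [Set.mem_setOf_eq] at hα hβ
    have hγ0 : α - β ≠ 0 := sub_ne_zero.mpr hne
    have hγ : (α - β) ^ q = a * (α - β) := by
      rw [hsub, hα, hβ]; ring
    have hA : a ^ (q + 1) = 1 := by
      have h2 : a ^ (q + 1) * (α - β) = 1 * (α - β) := by
        calc a ^ (q + 1) * (α - β) = a ^ q * (a * (α - β)) := by rw [pow_succ]; ring
          _ = a ^ q * (α - β) ^ q := by rw [hγ]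
          _ = (a * (α - β)) ^ q := by rw [mul_pow]
          _ = ((α - β) ^ q) ^ q := by rw [hγ]
          _ = 1 * (α - β) := by rw [hcardpow]; ring
      exact mul_right_cancel₀ hγ0 h2
    refine ⟨hA, ?_⟩
    have hb : b = α ^ q - a * α := by linear_combination -hα
    have hbq : b ^ q = -(a ^ q * b) := by
      calc b ^ q = (α ^ q - a * α) ^ q := by rw [← hb]
        _ = (α ^ q) ^ q - (a * α) ^ q := hsub _ _
        _ = α - a ^ q * α ^ q := by rw [hcardpow, mul_pow]
        _ = α - a ^ q * (a * α + b) := by rw [hα]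
        _ = (1 - a ^ (q + 1)) * α - a ^ q * b := by rw [pow_succ]; ring
        _ = -(a ^ q * b) := by rw [hA]; ring
    rw [hbq]; ring
  · rintro ⟨hA, hB⟩
    obtain ⟨γ, hγ0, hγ⟩ := stmt10_aux_gamma hq2 hcard hA
    -- the additive map L x = x^q - a x
    set L : F →+ F :=
      { toFun := fun x => x ^ q - a * x
        map_zero' := by simp [zero_pow hq0]
        map_add' := fun x y => by
          show (x + y) ^ q - a * (x + y) = (x ^ q - a * x) + (y ^ q - a * y)
          rw [hadd]; ring } with hL
    have hLapp : ∀ x : F, L x = x ^ q - a * x := fun x => rfl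
    set KM : Set F := {y : F | y ^ q = -(a ^ q) * y} with hKM
    have hrange : (L.range : Set F) ⊆ KM := by
      rintro y ⟨x, rfl⟩
      show (L x) ^ q = -(a ^ q) * (L x)
      rw [hLapp, hsub, hcardpow, mul_pow]
      have : (a ^ q) * (a * x) = x := by
        calc (a ^ q) * (a * x) = a ^ (q + 1) * x := by rw [pow_succ]; ring
          _ = x := by rw [hA]; ring
      linear_combination -this
    -- cardinalities
    have hKMle : KM.ncard ≤ q := stmt10_aux_roots hq2 (-(a ^ q))
    have hkerset : (L.ker : Set F) = {x : F | x ^ q = a * x} := by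
      ext x
      simp only [SetLike.mem_coe, AddMonoidHom.mem_ker, hLapp, Set.mem_setOf_eq, sub_eq_zero]
    have hkerle : Nat.card L.ker ≤ q := by
      have := stmt10_aux_roots hq2 a
      rw [← hkerset, ← Nat.card_coe_set_eq] at this
      simpa using this
    have hsplit : Nat.card L.range * Nat.card L.ker = q * q := by
      rw [← Nat.card_congr (QuotientAddGroup.quotientKerEquivRange L).toEquiv,
        ← AddSubgroup.card_eq_card_quotient_mul_card_addSubgroup, Nat.card_eq_fintype_card,
        hcard, pow_two]
    have hqle : q ≤ Nat.card L.range := by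
      have h1 : q * q ≤ Nat.card L.range * q :=
        hsplit ▸ Nat.mul_le_mul_left _ hkerle
      exact Nat.le_of_mul_le_mul_right h1 (by omega)
    have heq : (L.range : Set F) = KM := by
      apply Set.eq_of_subset_of_ncard_le hrange _ (Set.toFinite KM)
      calc KM.ncard ≤ q := hKMle
        _ ≤ Nat.card L.range := hqle
        _ = (L.range : Set F).ncard := by
          rw [← Nat.card_coe_set_eq]; rfl
    have hbmem : b ∈ KM := by
      show b ^ q = -(a ^ q) * b
      linear_combination hB
    rw [← heq] at hbmem
    obtain ⟨α₀, hα₀⟩ := hbmem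
    rw [hLapp] at hα₀
    have h1 : α₀ ∈ {α : F | α ^ q = a * α + b} := by
      show α₀ ^ q = a * α₀ + b
      linear_combination hα₀
    have h2 : α₀ + γ ∈ {α : F | α ^ q = a * α + b} := by
      show (α₀ + γ) ^ q = a * (α₀ + γ) + b
      rw [hadd, hγ]
      linear_combination hα₀
    exact ⟨α₀, h1, α₀ + γ, h2, by simpa using hγ0⟩
end

section
/- Let q be a prime power, let F_{q^2} be the finite field with q^2 elements, and let a, b ∈ F_{q^2} satisfy a^{q+1} = 1 and b^q + a^q·b = 0. Let n = 2k and let α_1, ..., α_n be distinct elements of S_1 = {α ∈ F_{q^2} : α^q = a·α + b}, and let v = (v_1, ..., v_n) ∈ (F_{q^2}^*)^n. Set G(x) = ∏_{i=1}^n (x − α_i) with formal derivative G'(x). Then the generalized Reed–Solomon code GRS_{n,k}(α, v) is Hermitian self-dual if and only if there exists λ ∈ F_{q^2}^* such that v_i^{q+1}·G'(α_i) = λ for every i = 1, ..., n. -/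
open Finset Polynomial

namespace Stmt12Aux

variable {F : Type*} [Field F] {n : ℕ} {α : Fin n → F}

/-- The nodal polynomial with the `i`-th node removed. -/
noncomputable def Nd (α : Fin n → F) (i : Fin n) : Polynomial F :=
  Lagrange.nodal (Finset.univ.erase i) α

/-- `∏_{j ≠ i} (α i - α j)`, the evaluation of `G'` at `α i`. -/
noncomputable def dd (α : Fin n → F) (i : Fin n) : F :=
  ∏ j ∈ Finset.univ.erase i, (α i - α j)

lemma dd_ne_zero (hα : Function.Injective α) (i : Fin n) : dd α i ≠ 0 := by
  unfold dd
  rw [Finset.prod_ne_zero_iff]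
  intro j hj
  rw [sub_ne_zero]
  exact fun h => (Finset.mem_erase.mp hj).1 ((hα h).symm)

lemma eval_Nd_self (i : Fin n) : (Nd α i).eval (α i) = dd α i := by
  simp [Nd, dd, Lagrange.eval_nodal]

lemma eval_Nd_ne {i j : Fin n} (hij : i ≠ j) : (Nd α j).eval (α i) = 0 := by
  rw [Nd, Lagrange.eval_nodal]
  exact Finset.prod_eq_zero (Finset.mem_erase.mpr ⟨hij, Finset.mem_univ i⟩) (sub_self _)

lemma Nd_natDegree (i : Fin n) : (Nd α i).natDegree = n - 1 := by
  rw [Nd, Lagrange.natDegree_nodal]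
  simp [Finset.card_erase_of_mem]

lemma coeff_Nd (i : Fin n) : (Nd α i).coeff (n - 1) = 1 := by
  have h := (Lagrange.nodal_monic (s := Finset.univ.erase i) (v := α)).coeff_natDegree
  rwa [show (Lagrange.nodal (Finset.univ.erase i) α).natDegree = n - 1 from
    Nd_natDegree (α := α) i] at h

lemma degree_Nd_le (i : Fin n) : (Nd α i).degree ≤ ((n - 1 : ℕ) : WithBot ℕ) := by
  rw [Nd, Lagrange.degree_nodal]
  simp [Finset.card_erase_of_mem]

/-- The "interpolating" polynomial `∑ⱼ wⱼ ∏_{l ≠ j}(X - αₗ)`. -/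
noncomputable def hpoly (α : Fin n → F) (w : Fin n → F) : Polynomial F :=
  ∑ j, Polynomial.C (w j) * Nd α j

lemma eval_hpoly (w : Fin n → F) (i : Fin n) :
    (hpoly α w).eval (α i) = w i * dd α i := by
  rw [hpoly, Polynomial.eval_finset_sum]
  rw [Finset.sum_eq_single i]
  · simp [eval_Nd_self]
  · intro j _ hj
    simp [eval_Nd_ne (show i ≠ j from fun h => hj h.symm)]
  · simp

lemma coeff_hpoly (w : Fin n → F) : (hpoly α w).coeff (n - 1) = ∑ j, w j := by
  rw [hpoly, Polynomial.finset_sum_coeff]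
  refine Finset.sum_congr rfl fun j _ => ?_
  rw [Polynomial.coeff_C_mul, coeff_Nd, mul_one]

lemma degree_hpoly_lt (w : Fin n → F) : (hpoly α w).degree < (n : WithBot ℕ) := by
  rcases Nat.eq_zero_or_pos n with h | h
  · subst h
    rw [hpoly, Finset.univ_eq_empty, Finset.sum_empty, Polynomial.degree_zero]
    exact WithBot.bot_lt_coe 0
  · refine lt_of_le_of_lt (Polynomial.degree_sum_le _ _) ?_
    refine (Finset.sup_lt_iff (WithBot.bot_lt_coe n)).mpr fun j _ => ?_
    refine lt_of_le_of_lt (Polynomial.degree_mul_le _ _) ?_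
    refine lt_of_le_of_lt (add_le_add Polynomial.degree_C_le (degree_Nd_le j)) ?_
    rw [zero_add]
    exact Nat.cast_lt.mpr (Nat.sub_lt h one_pos)

lemma degree_le_coe_sub_one {p : Polynomial F} {c : ℕ}
    (h : p.degree < (c : WithBot ℕ)) : p.degree ≤ ((c - 1 : ℕ) : WithBot ℕ) := by
  rcases eq_or_ne p 0 with rfl | h0
  · simp
  · rw [Polynomial.degree_eq_natDegree h0] at h ⊢
    have h1 : p.natDegree < c := by exact_mod_cast h
    exact_mod_cast Nat.le_sub_one_of_lt h1

/-- The residue lemma: if `deg P < n - 1` then `∑ P(αᵢ)/G'(αᵢ) = 0`. -/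
lemma sum_eval_mul_inv_dd (hα : Function.Injective α) (hn : 1 ≤ n) (P : Polynomial F)
    (hP : P.degree < ((n - 1 : ℕ) : WithBot ℕ)) :
    ∑ i, P.eval (α i) * (dd α i)⁻¹ = 0 := by
  set c : Fin n → F := fun i => P.eval (α i) * (dd α i)⁻¹ with hc
  have hQP : hpoly α c = P := by
    have hdegsub : (hpoly α c - P).degree < (n : WithBot ℕ) := by
      refine lt_of_le_of_lt (Polynomial.degree_sub_le _ _) (max_lt (degree_hpoly_lt c) ?_)
      refine lt_of_lt_of_le hP ?_
      exact_mod_cast Nat.sub_le n 1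
    have hdeg : (hpoly α c - P).natDegree < Fintype.card (Fin n) := by
      rw [Fintype.card_fin]
      rcases eq_or_ne (hpoly α c - P) 0 with h0 | h0
      · rw [h0]; simpa using Nat.lt_of_lt_of_le Nat.zero_lt_one hn
      · exact (Polynomial.natDegree_lt_iff_degree_lt h0).mpr hdegsub
    have hz := Polynomial.eq_zero_of_natDegree_lt_card_of_eval_eq_zero (hpoly α c - P) hα
      (fun i => by
        rw [Polynomial.eval_sub, eval_hpoly, hc]
        simp only
        rw [inv_mul_cancel_right₀ (dd_ne_zero hα i), sub_self]) hdeg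
    exact sub_eq_zero.mp hz
  have h1 : P.coeff (n - 1) = 0 := Polynomial.coeff_eq_zero_of_degree_lt hP
  rw [← hQP, coeff_hpoly] at h1
  exact h1

/-- The key duality lemma for evaluation codes. -/
lemma key (hα : Function.Injective α) (m : ℕ) (hm : m ≤ n) (w : Fin n → F) :
    (∀ g : Polynomial F, g.degree < (m : WithBot ℕ) → ∑ i, w i * g.eval (α i) = 0) ↔
      ∃ h : Polynomial F, h.degree < ((n - m : ℕ) : WithBot ℕ) ∧
        ∀ i, w i * dd α i = h.eval (α i) := by
  constructor
  · intro hg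
    refine ⟨hpoly α w, ?_, fun i => (eval_hpoly w i).symm⟩
    have main : ∀ j, j ≤ m → (hpoly α w).degree < ((n - j : ℕ) : WithBot ℕ) := by
      intro j
      induction j with
      | zero => intro _; simpa using degree_hpoly_lt w
      | succ j ih =>
        intro hj1
        have hj : j < m := lt_of_lt_of_le (Nat.lt_succ_self j) hj1
        have IH := ih hj.le
        rw [Polynomial.degree_lt_iff_coeff_zero]
        intro m' hm'
        rcases lt_or_ge m' (n - j) with h' | h'
        · have hmj : m' = n - 1 - j := by omega
          subst hmj
          have hjn : j ≤ n - 1 := by omega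
          set H := hpoly α (fun i => w i * α i ^ j) with hH
          have hXh : X ^ j * hpoly α w = H := by
            have hdvd : (Lagrange.nodal Finset.univ α) ∣ (X ^ j * hpoly α w - H) := by
              have heq : X ^ j * hpoly α w - H =
                  ∑ i, Polynomial.C (w i) * ((X ^ j - Polynomial.C (α i) ^ j) * Nd α i) := by
                rw [hH, hpoly, hpoly, Finset.mul_sum, ← Finset.sum_sub_distrib]
                refine Finset.sum_congr rfl fun i _ => ?_
                rw [Polynomial.C_mul, ← Polynomial.C_pow]
                ring
              rw [heq]
              refine Finset.dvd_sum fun i _ => ?_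
              obtain ⟨r, hr⟩ := sub_dvd_pow_sub_pow X (Polynomial.C (α i)) j
              have h2 : Lagrange.nodal Finset.univ α = (X - Polynomial.C (α i)) * Nd α i :=
                Lagrange.nodal_eq_mul_nodal_erase (Finset.mem_univ i)
              exact ⟨Polynomial.C (w i) * r, by rw [hr, h2]; ring⟩
            have hdegG : (Lagrange.nodal (Finset.univ : Finset (Fin n)) α).degree
                = (n : WithBot ℕ) := by
              rw [Lagrange.degree_nodal]; simp
            have hdegsub : (X ^ j * hpoly α w - H).degree
                < (Lagrange.nodal (Finset.univ : Finset (Fin n)) α).degree := by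
              rw [hdegG]
              refine lt_of_le_of_lt (Polynomial.degree_sub_le _ _)
                (max_lt ?_ (degree_hpoly_lt _))
              refine lt_of_le_of_lt (Polynomial.degree_mul_le _ _) ?_
              have h3 : (hpoly α w).degree ≤ ((n - j - 1 : ℕ) : WithBot ℕ) :=
                degree_le_coe_sub_one IH
              refine lt_of_le_of_lt (add_le_add (Polynomial.degree_X_pow j).le h3) ?_
              have : ((j : ℕ) : WithBot ℕ) + ((n - j - 1 : ℕ) : WithBot ℕ)
                  = ((n - 1 : ℕ) : WithBot ℕ) := by
                rw [← Nat.cast_add]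
                congr 1
                omega
              rw [this]
              exact_mod_cast Nat.sub_lt (by omega) one_pos
            exact sub_eq_zero.mp (Polynomial.eq_zero_of_dvd_of_degree_lt hdvd hdegsub)
          have hc1 : (X ^ j * hpoly α w).coeff (n - 1) = (hpoly α w).coeff (n - 1 - j) := by
            have hs2 := Polynomial.coeff_X_pow_mul (hpoly α w) j (n - 1 - j)
            rwa [show (n - 1 - j) + j = n - 1 from by omega] at hs2
          have hzero : ∑ i, w i * α i ^ j = 0 := by
            have := hg (X ^ j) (by rw [Polynomial.degree_X_pow]; exact_mod_cast hj)
            simpa using this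
          rw [← hc1, hXh, hH, coeff_hpoly, hzero]
        · exact Polynomial.coeff_eq_zero_of_degree_lt
            (lt_of_lt_of_le IH (by exact_mod_cast h'))
    exact main m le_rfl
  · rintro ⟨h, hdh, hwh⟩ g hgdeg
    rcases eq_or_ne h 0 with rfl | hh0
    · have hw0 : ∀ i, w i = 0 := fun i => by
        have h1 := hwh i
        rw [Polynomial.eval_zero] at h1
        exact (mul_eq_zero.mp h1).resolve_right (dd_ne_zero hα i)
      simp [hw0]
    rcases eq_or_ne g 0 with rfl | hg0
    · simp
    have hhn : h.natDegree < n - m := (Polynomial.natDegree_lt_iff_degree_lt hh0).mpr hdh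
    have hgn : g.natDegree < m := (Polynomial.natDegree_lt_iff_degree_lt hg0).mpr hgdeg
    have hP : (h * g).degree < ((n - 1 : ℕ) : WithBot ℕ) := by
      refine lt_of_le_of_lt (Polynomial.degree_mul_le _ _) ?_
      rw [Polynomial.degree_eq_natDegree hh0, Polynomial.degree_eq_natDegree hg0,
        ← Nat.cast_add]
      exact_mod_cast by omega
    have hsum := sum_eval_mul_inv_dd hα (by omega) (h * g) hP
    refine Eq.trans (Finset.sum_congr rfl fun i _ => ?_) hsum
    have hw : w i = h.eval (α i) * (dd α i)⁻¹ :=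
      (eq_mul_inv_iff_mul_eq₀ (dd_ne_zero hα i)).mpr (hwh i)
    rw [hw, Polynomial.eval_mul]
    ring

lemma degree_comp_linear {u w : F} (hu : u ≠ 0) (p : Polynomial F) :
    (p.comp (Polynomial.C u * Polynomial.X + Polynomial.C w)).degree = p.degree := by
  rcases eq_or_ne p 0 with rfl | h0
  · simp
  have hq1 : (Polynomial.C u * Polynomial.X + Polynomial.C w).natDegree = 1 :=
    Polynomial.natDegree_linear hu
  have hlcq : (Polynomial.C u * Polynomial.X + Polynomial.C w).leadingCoeff = u := by
    rw [Polynomial.leadingCoeff, hq1]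
    simp
  have hlc : (p.comp (Polynomial.C u * Polynomial.X + Polynomial.C w)).leadingCoeff ≠ 0 := by
    rw [Polynomial.leadingCoeff_comp (by rw [hq1]; exact one_ne_zero), hlcq]
    exact mul_ne_zero (Polynomial.leadingCoeff_ne_zero.mpr h0) (pow_ne_zero _ hu)
  have hc0 : p.comp (Polynomial.C u * Polynomial.X + Polynomial.C w) ≠ 0 :=
    fun h => hlc (by simp [h])
  rw [Polynomial.degree_eq_natDegree h0, Polynomial.degree_eq_natDegree hc0,
    Polynomial.natDegree_comp, hq1, mul_one]

end Stmt12Aux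

/-- Construction 1. Let `a^{q+1} = 1`, `b^q + a^q·b = 0`, and
let `α₁, ..., α_{2k}` be distinct elements of `S₁ = {α : α^q = a·α + b}`. With
`G(x) = ∏ (x - αᵢ)`, the code `GRS_{2k,k}(α, v)` is Hermitian self-dual iff
there is `λ ∈ F_{q²}^*` with `vᵢ^{q+1}·G'(αᵢ) = λ` for every `i`. -/
theorem stmt12 {F : Type*} [Field F] [Fintype F] (q k : ℕ)
    (hq : IsPrimePow q) (hcard : Fintype.card F = q ^ 2)
    (a b : F) (ha : a ^ (q + 1) = 1) (hb : b ^ q + a ^ q * b = 0)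
    (α : Fin (2 * k) → F) (hα : Function.Injective α)
    (hαS : ∀ i, α i ^ q = a * α i + b)
    (v : Fin (2 * k) → F) (hv : ∀ i, v i ≠ 0)
    (G : Polynomial F)
    (hG : G = ∏ i : Fin (2 * k), (X - Polynomial.C (α i))) :
    IsHermitianSelfDual q (2 * k) (GRScode (2 * k) k α v) ↔
      ∃ lam : F, lam ≠ 0 ∧
        ∀ i, v i ^ (q + 1) * (Polynomial.derivative G).eval (α i) = lam := by
  classical
  have ha0 : a ≠ 0 := by
    rintro rfl
    rw [zero_pow (Nat.succ_ne_zero q)] at ha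
    exact zero_ne_one ha
  obtain ⟨p, e, hp, he, hpe⟩ := hq
  have hpp : p.Prime := Nat.prime_iff.mpr hp
  haveI : Fact p.Prime := ⟨hpp⟩
  have hcast : (p : F) = 0 := by
    have h1 : ((Fintype.card F : ℕ) : F) = 0 := FiniteField.cast_card_eq_zero F
    rw [hcard, ← hpe] at h1
    have h2 : ((p : F) ^ e) ^ 2 = 0 := by exact_mod_cast h1
    rw [← pow_mul] at h2
    exact pow_eq_zero_iff (by positivity) |>.mp h2
  haveI hchar : CharP F p := by
    have hdvd : ringChar F ∣ p := ringChar.dvd hcast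
    rcases hpp.eq_one_or_self_of_dvd _ hdvd with h | h
    · exact absurd h CharP.ringChar_ne_one
    · rw [← h]; exact ringChar.charP F
  set φ : F →+* F := iterateFrobenius F p e with hφdef
  have hφ : ∀ x : F, φ x = x ^ q := fun x => by
    rw [hφdef, iterateFrobenius_def, hpe]
  have hφbij : Function.Bijective φ := Finite.injective_iff_bijective.mp φ.injective
  set ψ : F ≃+* F := RingEquiv.ofBijective φ hφbij with hψdef
  have hψ : ∀ x : F, ψ x = x ^ q := hφ
  set L : Polynomial F := Polynomial.C a * X + Polynomial.C b with hL
  set L' : Polynomial F := Polynomial.C a⁻¹ * X + Polynomial.C (-(a⁻¹ * b)) with hL'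
  set gOf : Polynomial F → Polynomial F := fun f => (f.map ψ.toRingHom).comp L with hgOf
  have hgEval : ∀ (f : Polynomial F) (i : Fin (2*k)),
      (gOf f).eval (α i) = (f.eval (α i)) ^ q := by
    intro f i
    rw [hgOf]
    simp only
    rw [Polynomial.eval_comp]
    have hLa : L.eval (α i) = ψ.toRingHom (α i) := by
      rw [hL]
      simp only [Polynomial.eval_add, Polynomial.eval_mul, Polynomial.eval_C, Polynomial.eval_X]
      rw [show ψ.toRingHom (α i) = ψ (α i) from rfl, hψ, hαS i]
    rw [hLa, Polynomial.eval_map, Polynomial.eval₂_at_apply]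
    exact hψ _
  have hmapdeg : ∀ f : Polynomial F, (f.map ψ.toRingHom).degree = f.degree :=
    fun f => Polynomial.degree_map f ψ.toRingHom
  have hgDeg : ∀ f : Polynomial F, f.degree < (k : WithBot ℕ) →
      (gOf f).degree < (k : WithBot ℕ) := by
    intro f hf
    rw [hgOf]
    simp only
    rw [hL, Stmt12Aux.degree_comp_linear ha0, hmapdeg]
    exact hf
  have hgSurj : ∀ g : Polynomial F, g.degree < (k : WithBot ℕ) →
      ∃ f, f.degree < (k : WithBot ℕ) ∧ gOf f = g := by
    intro g hg
    refine ⟨(g.comp L').map ψ.symm.toRingHom, ?_, ?_⟩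
    · rw [Polynomial.degree_map, hL', Stmt12Aux.degree_comp_linear (inv_ne_zero ha0)]
      exact hg
    · rw [hgOf]
      simp only
      rw [Polynomial.map_map]
      have hcompid : ψ.toRingHom.comp ψ.symm.toRingHom = RingHom.id F := by
        ext x
        simp
      rw [hcompid, Polynomial.map_id, Polynomial.comp_assoc]
      have hLL : L'.comp L = Polynomial.X := by
        rw [hL', hL]
        simp only [Polynomial.add_comp, Polynomial.mul_comp, Polynomial.C_comp,
          Polynomial.X_comp]
        rw [mul_add, ← mul_assoc, ← Polynomial.C_mul, inv_mul_cancel₀ ha0, Polynomial.C_1,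
          one_mul, ← Polynomial.C_mul, add_assoc, ← Polynomial.C_add]
        simp
      rw [hLL, Polynomial.comp_X]
  have hdual : ∀ x : Fin (2*k) → F,
      (∀ y ∈ GRScode (2*k) k α v, ∑ i, x i * y i ^ q = 0) ↔
      (∀ g : Polynomial F, g.degree < (k : WithBot ℕ) →
        ∑ i, (x i * v i ^ q) * g.eval (α i) = 0) := by
    intro x
    constructor
    · intro hx g hgdeg
      obtain ⟨f, hf, hfg⟩ := hgSurj g hgdeg
      have hy : (fun i => v i * f.eval (α i)) ∈ GRScode (2*k) k α v :=
        ⟨f, hf, fun i => rfl⟩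
      have h0 := hx _ hy
      rw [← h0]
      refine Finset.sum_congr rfl fun i _ => ?_
      rw [← hfg, hgEval f i, mul_pow]
      ring
    · intro hx y hy
      obtain ⟨f, hf, hyf⟩ := hy
      have h0 := hx (gOf f) (hgDeg f hf)
      rw [← h0]
      refine Finset.sum_congr rfl fun i _ => ?_
      rw [hyf i, hgEval f i, mul_pow]
      ring
  have hG' : ∀ i, (Polynomial.derivative G).eval (α i) = Stmt12Aux.dd α i := by
    intro i
    have hGn : G = Lagrange.nodal Finset.univ α := by rw [hG]; rfl
    rw [hGn, Lagrange.eval_nodal_derivative_eval_node_eq (Finset.mem_univ i),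
      Lagrange.eval_nodal]
    rfl
  have hQ : ∀ x : Fin (2*k) → F,
      (∀ y ∈ GRScode (2*k) k α v, ∑ i, x i * y i ^ q = 0) ↔
      ∃ h : Polynomial F, h.degree < (k : WithBot ℕ) ∧
        ∀ i, (x i * v i ^ q) * Stmt12Aux.dd α i = h.eval (α i) := by
    intro x
    rw [hdual x]
    have hk2 : 2 * k - k = k := by omega
    have := Stmt12Aux.key (α := α) hα k (by omega) (fun i => x i * v i ^ q)
    rw [hk2] at this
    exact this
  constructor
  · intro hSD
    have hSDeq : GRScode (2*k) k α v
        = {x | ∀ y ∈ GRScode (2*k) k α v, ∑ i, x i * y i ^ q = 0} := hSD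
    rcases Nat.eq_zero_or_pos k with rfl | hk
    · exact ⟨1, one_ne_zero, fun i => absurd i.2 (by omega)⟩
    have hSD' : ∀ x ∈ GRScode (2*k) k α v, ∀ y ∈ GRScode (2*k) k α v,
        ∑ i, x i * y i ^ q = 0 := by
      intro x hx
      rw [hSDeq] at hx
      exact hx
    have hmono : ∀ m : ℕ, m ≤ 2*k - 2 → ∑ i, v i ^ (q+1) * α i ^ m = 0 := by
      intro m hm2
      set s := min m (k-1) with hs
      set t := m - s with ht
      have hst : s + t = m := by omega
      have hsk : s < k := by omega
      have htk : t < k := by omega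
      have hx : (fun i => v i * (X^s : Polynomial F).eval (α i)) ∈ GRScode (2*k) k α v :=
        ⟨X^s, by rw [Polynomial.degree_X_pow]; exact_mod_cast hsk, fun i => rfl⟩
      have h1 := (hdual _).mp (hSD' _ hx) (X^t)
        (by rw [Polynomial.degree_X_pow]; exact_mod_cast htk)
      rw [← h1]
      refine Finset.sum_congr rfl fun i _ => ?_
      simp only [Polynomial.eval_pow, Polynomial.eval_X]
      rw [← hst, pow_add, pow_succ]
      ring
    have hP : ∀ P : Polynomial F, P.degree < ((2*k - 1 : ℕ) : WithBot ℕ) →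
        ∑ i, v i ^ (q+1) * P.eval (α i) = 0 := by
      intro P hPd
      rcases eq_or_ne P 0 with rfl | hP0
      · simp
      have hnd : P.natDegree < 2*k - 1 := (Polynomial.natDegree_lt_iff_degree_lt hP0).mpr hPd
      calc ∑ i, v i ^ (q+1) * P.eval (α i)
          = ∑ i, ∑ m ∈ Finset.range (2*k-1), P.coeff m * (v i ^ (q+1) * α i ^ m) := by
            refine Finset.sum_congr rfl fun i _ => ?_
            rw [Polynomial.eval_eq_sum_range' hnd (α i), Finset.mul_sum]
            exact Finset.sum_congr rfl fun m _ => by ring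
        _ = ∑ m ∈ Finset.range (2*k-1), P.coeff m * ∑ i, v i ^ (q+1) * α i ^ m := by
            rw [Finset.sum_comm]
            exact Finset.sum_congr rfl fun m _ => by rw [Finset.mul_sum]
        _ = 0 := by
            refine Finset.sum_eq_zero fun m hm => ?_
            rw [hmono m (by rw [Finset.mem_range] at hm; omega), mul_zero]
    obtain ⟨h, hdh, hwh⟩ := (Stmt12Aux.key hα (2*k-1) (by omega) (fun i => v i ^ (q+1))).mp
      (fun g hg => hP g hg)
    rw [show 2*k - (2*k-1) = 1 by omega] at hdh
    have hdh1 : h.degree < 1 := by exact_mod_cast hdh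
    have hhC : h = Polynomial.C (h.coeff 0) :=
      Polynomial.eq_C_of_degree_le_zero (Nat.WithBot.lt_one_iff_le_zero.mp hdh1)
    have hevalC : ∀ i : Fin (2*k), h.eval (α i) = h.coeff 0 := by
      intro i
      conv_lhs => rw [hhC]
      rw [Polynomial.eval_C]
    set i0 : Fin (2*k) := ⟨0, by omega⟩
    refine ⟨h.coeff 0, ?_, ?_⟩
    · have h2 := (hwh i0).trans (hevalC i0)
      rw [← h2]
      exact mul_ne_zero (pow_ne_zero _ (hv i0)) (Stmt12Aux.dd_ne_zero hα i0)
    · intro i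
      rw [hG' i]
      exact (hwh i).trans (hevalC i)
  · rintro ⟨lam, hlam, hl⟩
    have hl' : ∀ i, v i ^ (q+1) * Stmt12Aux.dd α i = lam := by
      intro i
      rw [← hG' i]
      exact hl i
    show GRScode (2*k) k α v = {x | ∀ y ∈ GRScode (2*k) k α v, ∑ i, x i * y i ^ q = 0}
    ext x
    simp only [Set.mem_setOf_eq]
    constructor
    · rintro ⟨f, hf, hxf⟩
      refine (hQ x).mpr ⟨Polynomial.C lam * f, ?_, ?_⟩
      · refine lt_of_le_of_lt (Polynomial.degree_mul_le _ _) ?_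
        refine lt_of_le_of_lt (add_le_add Polynomial.degree_C_le le_rfl) ?_
        rw [zero_add]
        exact hf
      · intro i
        rw [hxf i, Polynomial.eval_mul, Polynomial.eval_C]
        calc v i * f.eval (α i) * v i ^ q * Stmt12Aux.dd α i
            = (v i ^ (q+1) * Stmt12Aux.dd α i) * f.eval (α i) := by rw [pow_succ]; ring
          _ = lam * f.eval (α i) := by rw [hl' i]
    · intro hx
      obtain ⟨h, hdh, hwh⟩ := (hQ x).mp hx
      refine ⟨Polynomial.C lam⁻¹ * h, ?_, fun i => ?_⟩
      · refine lt_of_le_of_lt (Polynomial.degree_mul_le _ _) ?_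
        refine lt_of_le_of_lt (add_le_add Polynomial.degree_C_le le_rfl) ?_
        rw [zero_add]
        exact hdh
      · rw [Polynomial.eval_mul, Polynomial.eval_C, ← hwh i]
        have hdd := Stmt12Aux.dd_ne_zero hα i
        have hlam' : v i ^ (q+1) * Stmt12Aux.dd α i ≠ 0 :=
          mul_ne_zero (pow_ne_zero _ (hv i)) hdd
        rw [← hl' i]
        have hvi := hv i
        field_simp
        rw [pow_succ]
        ring
end

section
/- Let q be a prime power, let F_{q^2} be the finite field with q^2 elements, and let λ_0, λ_1, c_0, c_1 ∈ F_{q^2} with λ_1 ≠ 0 and λ_1 + λ_1^q ≠ 0. Set a = (λ_0 − c_1^q)/(λ_1 + λ_1^q) and b = (c_0 + c_0^q)/(λ_1 + λ_1^q) + a^{q+1}. Then every α ∈ F_{q^2} satisfying λ_1·α^{q+1} + λ_0·α^q − c_1·α − c_0 = 0 also satisfies (α + a)^{q+1} = b. -/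
/-- Case (2) of the classification: if `λ₁ ≠ 0` and
`λ₁ + λ₁^q ≠ 0`, set `a = (λ₀ - c₁^q)/(λ₁ + λ₁^q)` and
`b = (c₀ + c₀^q)/(λ₁ + λ₁^q) + a^{q+1}`. Then every `α ∈ F_{q²}` with
`λ₁·α^{q+1} + λ₀·α^q - c₁·α - c₀ = 0` satisfies `(α + a)^{q+1} = b`. -/
theorem stmt15 {F : Type*} [Field F] [Fintype F] (q : ℕ)
    (hq : IsPrimePow q) (hcard : Fintype.card F = q ^ 2)
    (l0 l1 c0 c1 : F) (hl1 : l1 ≠ 0) (hl1q : l1 + l1 ^ q ≠ 0)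
    (a b : F) (ha : a = (l0 - c1 ^ q) / (l1 + l1 ^ q))
    (hb : b = (c0 + c0 ^ q) / (l1 + l1 ^ q) + a ^ (q + 1)) :
    ∀ α : F, l1 * α ^ (q + 1) + l0 * α ^ q - c1 * α - c0 = 0 →
      (α + a) ^ (q + 1) = b := by
  obtain ⟨p, n, hp, hn, rfl⟩ := hq
  have hp' : p.Prime := hp.nat_prime
  haveI : Fact p.Prime := ⟨hp'⟩
  haveI hcp : CharP F p := by
    obtain ⟨r, hc⟩ := CharP.exists F
    obtain ⟨m, hr, hcard'⟩ := @FiniteField.card F _ _ r hc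
    have hrp : r = p := by
      have h1 : r ∣ (p ^ n) ^ 2 := by
        rw [← hcard, hcard']
        exact dvd_pow_self r m.2.ne'
      rw [← pow_mul] at h1
      exact (Nat.prime_dvd_prime_iff_eq hr hp').mp (hr.prime.dvd_of_dvd_pow h1)
    rwa [hrp] at hc
  set q := p ^ n with hqdef
  -- the q-power Frobenius
  set φ : F →+* F := iterateFrobenius F p n with hφdef
  have hφ : ∀ x : F, φ x = x ^ q := fun x => rfl
  have hq2 : ∀ x : F, (x ^ q) ^ q = x := by
    intro x
    rw [← pow_mul, ← sq, ← hcard, FiniteField.pow_card]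
  -- Frobenius fixes s := l1 + l1^q
  have hsq : (l1 + l1 ^ q) ^ q = l1 + l1 ^ q := by
    rw [← hφ, map_add, hφ, hφ, hq2, add_comm]
  have haq : a ^ q = (l0 ^ q - c1) / (l1 + l1 ^ q) := by
    rw [ha, div_pow, hsq, ← hφ, map_sub, hφ, hφ, hq2]
  intro α hα
  -- Frobenius image of the relation
  have hα' : l1 ^ q * α ^ (q + 1) + l0 ^ q * α - c1 ^ q * α ^ q - c0 ^ q = 0 := by
    have h := congrArg φ hα
    rw [map_zero, map_sub, map_sub, map_add, map_mul, map_mul, map_mul] at h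
    rw [hφ, hφ, hφ, hφ, hφ, hφ, hφ] at h
    have h1 : (α ^ (q + 1)) ^ q = α ^ (q + 1) := by
      rw [pow_succ, mul_pow, hq2, mul_comm]
    rw [h1, hq2] at h
    linear_combination h
  have hs : (l1 + l1 ^ q) ≠ 0 := hl1q
  have hsa : (l1 + l1 ^ q) * a = l0 - c1 ^ q := by
    rw [ha, mul_div_cancel₀ _ hs]
  have hsaq : (l1 + l1 ^ q) * a ^ q = l0 ^ q - c1 := by
    rw [haq, mul_div_cancel₀ _ hs]
  have hsb : (l1 + l1 ^ q) * b = c0 + c0 ^ q + ((l1 + l1 ^ q) * a ^ q) * a := by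
    rw [hb, pow_succ, mul_add, mul_div_cancel₀ _ hs]
    ring
  have hexp : (α + a) ^ (q + 1) = (α ^ q + a ^ q) * (α + a) := by
    rw [pow_succ]
    congr 1
    rw [← hφ, map_add, hφ, hφ]
  have key : (l1 + l1 ^ q) * ((α + a) ^ (q + 1)) = (l1 + l1 ^ q) * b := by
    rw [hexp, hsb]
    linear_combination hα + hα' + α ^ q * hsa + α * hsaq
  exact mul_left_cancel₀ hs key
end

section
/- Let q be a prime power, let F_{q^2} be the finite field with q^2 elements, and let λ_0, λ_1, c_0, c_1 ∈ F_{q^2} with λ_1 ≠ 0, λ_1 + λ_1^q = 0, and λ_0 − c_1^q ≠ 0. Set a = −(λ_0^q − c_1)/(λ_0 − c_1^q) and b = (c_0 + c_0^q)/(λ_0 − c_1^q). Then every α ∈ F_{q^2} satisfying λ_1·α^{q+1} + λ_0·α^q − c_1·α − c_0 = 0 also satisfies α^q = a·α + b. -/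
/-- Case (3) of the classification: if `λ₁ ≠ 0`,
`λ₁ + λ₁^q = 0` and `λ₀ - c₁^q ≠ 0`, set `a = -(λ₀^q - c₁)/(λ₀ - c₁^q)` and
`b = (c₀ + c₀^q)/(λ₀ - c₁^q)`. Then every `α ∈ F_{q²}` with
`λ₁·α^{q+1} + λ₀·α^q - c₁·α - c₀ = 0` satisfies `α^q = a·α + b`. -/
theorem stmt16 {F : Type*} [Field F] [Fintype F] (q : ℕ)
    (hq : IsPrimePow q) (hcard : Fintype.card F = q ^ 2)
    (l0 l1 c0 c1 : F) (hl1 : l1 ≠ 0) (hl1q : l1 + l1 ^ q = 0)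
    (hlc : l0 - c1 ^ q ≠ 0)
    (a b : F) (ha : a = -(l0 ^ q - c1) / (l0 - c1 ^ q))
    (hb : b = (c0 + c0 ^ q) / (l0 - c1 ^ q)) :
    ∀ α : F, l1 * α ^ (q + 1) + l0 * α ^ q - c1 * α - c0 = 0 →
      α ^ q = a * α + b := by
  intro α hrel
  obtain ⟨p, k, hp, hk, rfl⟩ := hq
  rw [Nat.prime_iff.symm] at hp
  haveI : CharP F (ringChar F) := ringChar.charP F
  obtain ⟨n, hr, hcard'⟩ := FiniteField.card F (ringChar F)
  have hrp : ringChar F = p := by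
    have hdvd : ringChar F ∣ Fintype.card F := hcard' ▸ dvd_pow_self _ n.pos.ne'
    rw [hcard, ← pow_mul] at hdvd
    exact (Nat.prime_dvd_prime_iff_eq hr hp).mp (hr.dvd_of_dvd_pow hdvd)
  haveI hcharp : CharP F p := hrp ▸ ringChar.charP F
  haveI : Fact p.Prime := ⟨hp⟩
  set φ : F →+* F := iterateFrobenius F p k with hφ
  have hφ' : ∀ x : F, φ x = x ^ p ^ k := fun x => by
    rw [hφ, iterateFrobenius_def]
  have hpow : ∀ x : F, (x ^ p ^ k) ^ p ^ k = x := by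
    intro x
    rw [← pow_mul, ← sq, ← hcard, FiniteField.pow_card]
  have hrel2 : l1 ^ (p ^ k) * (α * α ^ (p ^ k)) + l0 ^ (p ^ k) * α
      - c1 ^ (p ^ k) * α ^ (p ^ k) - c0 ^ (p ^ k) = 0 := by
    have h := congrArg φ hrel
    simp only [map_sub, map_add, map_mul, map_pow, map_zero] at h
    simp only [hφ'] at h
    rw [pow_succ, hpow α] at h
    linear_combination h
  have hl1q' : l1 ^ (p ^ k) = -l1 := by linear_combination hl1q
  rw [hl1q'] at hrel2
  have key : (l0 - c1 ^ (p ^ k)) * α ^ (p ^ k)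
      = (c1 - l0 ^ (p ^ k)) * α + (c0 + c0 ^ (p ^ k)) := by
    linear_combination hrel + hrel2
  rw [ha, hb]
  field_simp
  linear_combination key
end
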